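/- arXiv:2102.06795 — 6 statements merged into one kernel-verified Lean document; each statement's English description precedes it below -/
import Mathlib

section
/- For every k ≥ 0 and every integer i with 0 < i < S(k) and i ≠ S(k−1), one has |c_i| > |c_{S(k−1)}|. (That is, among the first S(k) − 1 iterates of the turning point 0, the closest return to 0 occurs exactly at the Fibonacci time S(k−1).) -/
open MeasureTheory Filter Set

open Nat (fib)

/-!
Write `d k = |c (fib k)|`. While `c (m + j)` and `c j` lie on the same side of the turning point,
the tent map multiplies their distance by `lam`; as `c 0 = 0` this gives
`|c (fib (k + 1) + j) - c j| = lam ^ j * d (k + 1)` for `j ≤ fib k`, and the sign change at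
`j = fib k` turns it into the recursion `d (k + 2) + d k = lam ^ fib k * d (k + 1)`.
For `i < fib (n + 1)` the claim follows by induction since `d` decreases. For
`i = fib (n + 1) + j` the triangle inequality and induction give
`|c i| ≥ |c j| - lam ^ j * d (n + 1) ≥ d (n - 1) - lam ^ j * d (n + 1)`, and the recursion,
together with `lam > 1.7` (read off from the signs of `c 3`, `c 4`, `c 5`), shows that this
exceeds `d (n + 1)`.
-/

lemma abs_abs_sub_abs_of_pos_iff {x y : ℝ} (h : 0 < x ↔ 0 < y) : |(|x| - |y|)| = |x - y| := by
  by_cases hx : 0 < x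
  · rw [abs_of_pos hx, abs_of_pos (h.1 hx)]
  · have hy : y ≤ 0 := not_lt.1 (mt h.2 hx)
    rw [abs_of_nonpos (not_lt.1 hx), abs_of_nonpos hy, ← abs_neg]
    ring_nf

lemma abs_sub_eq_abs_add_abs_of_pos_iff_neg {x y : ℝ} (h : 0 < x ↔ y < 0) :
    |x - y| = |x| + |y| := by
  rw [sub_eq_add_neg, (abs_add_eq_add_abs_iff _ _).2, abs_neg]
  by_cases hx : 0 < x
  · exact Or.inl ⟨hx.le, by linarith [h.1 hx]⟩
  · exact Or.inr ⟨not_lt.1 hx, by linarith [not_lt.1 (mt h.2 hx)]⟩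

lemma eq_fib_of_recurrence {S : ℤ → ℕ} (h₀ : S (-2) = 0) (h₁ : S (-1) = 1)
    (hrec : ∀ k : ℤ, 0 ≤ k → S k = S (k - 1) + S (k - 2)) (n : ℕ) : S (n - 2) = fib n := by
  induction n using Nat.twoStepInduction with
  | zero => exact h₀
  | one => exact h₁
  | more n ih₀ ih₁ =>
    rw [Nat.fib_add_two, ← ih₀, ← ih₁, hrec _ (by omega)]
    push_cast
    ring_nf

lemma abs_orbit_add_sub_eq_pow_mul {lam : ℝ} {c : ℕ → ℝ} (hlam : 0 ≤ lam) (hc₀ : c 0 = 0)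
    (hc : ∀ n, c (n + 1) = lam * (1 - |c n|) - 1) {m N : ℕ}
    (hsign : ∀ j, 0 < j → j < N → (0 < c (m + j) ↔ 0 < c j)) :
    ∀ j ≤ N, |c (m + j) - c j| = lam ^ j * |c m| := by
  intro j
  induction j with
  | zero => simp [hc₀]
  | succ j ih =>
    intro hj
    have hexp : |(|c (m + j)| - |c j|)| = |c (m + j) - c j| := by
      rcases j.eq_zero_or_pos with rfl | hj₀
      · simp [hc₀]
      · exact abs_abs_sub_abs_of_pos_iff (hsign j hj₀ hj)
    calc |c (m + (j + 1)) - c (j + 1)| = lam * |(|c (m + j)| - |c j|)| := by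
          rw [← add_assoc, hc, hc, show ∀ a b : ℝ, lam * (1 - a) - 1 - (lam * (1 - b) - 1)
            = lam * (b - a) by intros; ring, abs_mul, abs_of_nonneg hlam, abs_sub_comm]
      _ = lam ^ (j + 1) * |c m| := by rw [hexp, ih (by omega), pow_succ]; ring

lemma add_mul_add_lt_mul_of_pow_mul_lt {lam Y B C : ℝ} (hlam : 17 / 10 < lam) (hY : 0 ≤ Y)
    (hYB : lam ^ 3 * Y < 2 * B) (hBC : lam ^ 2 * B < 2 * C) : (1 + lam) * Y + B < lam * C := by
  have hl : 0 < lam := by linarith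
  have hB : 0 < B := by nlinarith [mul_nonneg (pow_pos hl 3).le hY]
  have hC : 0 < C := by nlinarith [mul_pos (pow_pos hl 2) hB]
  have hpoly : 4 + 4 * lam + 2 * lam ^ 3 < lam ^ 6 := by
    nlinarith [sq_nonneg (lam - 17 / 10), sq_nonneg lam, sq_nonneg (lam ^ 2 - 289 / 100)]
  refine lt_of_mul_lt_mul_left ?_ (pow_pos hl 5).le
  calc lam ^ 5 * ((1 + lam) * Y + B) = (1 + lam) * lam ^ 2 * (lam ^ 3 * Y) + lam ^ 5 * B := by ring
    _ < (1 + lam) * lam ^ 2 * (2 * B) + lam ^ 5 * B := by gcongr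
    _ = (2 + 2 * lam + lam ^ 3) * (lam ^ 2 * B) := by ring
    _ < (2 + 2 * lam + lam ^ 3) * (2 * C) := by gcongr
    _ < lam ^ 5 * (lam * C) := by nlinarith

/-- Fibonacci recurrence of the turning point for the tent-map orbit `c`, indexed so that the
paper's `S k` is `fib (k + 2)`. -/
structure IsFibonacciTentOrbit (lam : ℝ) (c : ℕ → ℝ) : Prop where
  one_lt : 1 < lam
  zero : c 0 = 0
  succ : ∀ n, c (n + 1) = lam * (1 - |c n|) - 1
  sign_shadow : ∀ k, 2 ≤ k → ∀ j, 0 < j → j < fib k → (0 < c (fib (k + 1) + j) ↔ 0 < c j)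
  sign_flip : ∀ k, 2 ≤ k → (0 < c (fib (k + 2)) ↔ c (fib k) < 0)
  abs_fib_succ_lt : ∀ k, 2 ≤ k → |c (fib (k + 1))| < |c (fib k)|

namespace IsFibonacciTentOrbit

variable {lam : ℝ} {c : ℕ → ℝ}

lemma abs_fib_add_two_add_abs_fib (h : IsFibonacciTentOrbit lam c) {k : ℕ} (hk : 2 ≤ k) :
    |c (fib (k + 2))| + |c (fib k)| = lam ^ fib k * |c (fib (k + 1))| := by
  have hshadow := abs_orbit_add_sub_eq_pow_mul (by linarith [h.one_lt]) h.zero h.succ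
    (h.sign_shadow k hk) (fib k) le_rfl
  rwa [add_comm, ← Nat.fib_add_two,
    abs_sub_eq_abs_add_abs_of_pos_iff_neg (h.sign_flip k hk)] at hshadow

lemma pow_fib_mul_abs_lt (h : IsFibonacciTentOrbit lam c) {k : ℕ} (hk : 2 ≤ k) :
    lam ^ fib k * |c (fib (k + 1))| < 2 * |c (fib k)| := by
  rw [← h.abs_fib_add_two_add_abs_fib hk]
  linarith [h.abs_fib_succ_lt k hk, h.abs_fib_succ_lt (k + 1) (by omega)]

lemma seventeen_tenths_lt (h : IsFibonacciTentOrbit lam c) : 17 / 10 < lam := by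
  have hlam := h.one_lt
  have hc₁ : c 1 = lam - 1 := by rw [h.succ, h.zero]; simp
  have hc₂ : c 2 = -(lam - 1) ^ 2 := by
    rw [h.succ, hc₁, abs_of_pos (by linarith)]; ring
  have hc₃ : c 3 ≤ 0 := by
    have := h.sign_flip 2 le_rfl
    norm_num [Nat.fib_add_two, hc₁] at this
    exact le_of_not_gt fun h₃ => (this.1 h₃).not_gt hlam
  have hc₄ : 0 < c 4 := by
    have := h.sign_shadow 3 (by norm_num) 1 one_pos (by norm_num [Nat.fib_add_two])
    norm_num [Nat.fib_add_two, hc₁] at this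
    exact this.2 hlam
  have hc₅ : 0 < c 5 := by
    have := h.sign_flip 3 (by norm_num)
    norm_num [Nat.fib_add_two, hc₂] at this
    exact this.2 (by nlinarith)
  have hpoly : c 5 = lam ^ 5 - 2 * lam ^ 4 + 2 * lam - 1 := by
    rw [h.succ 4, abs_of_pos hc₄, h.succ 3, abs_of_nonpos hc₃, h.succ 2,
      abs_of_nonpos (by rw [hc₂]; nlinarith), hc₂]
    ring
  -- `c 5 = (lam - 1) * (lam ^ 4 - lam ^ 3 - lam ^ 2 - lam + 1)`, whose root above `1` is `≈ 1.72`
  by_contra! hle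
  have hμ : 0 < lam - 1 := by linarith
  have hν : 0 ≤ 17 / 10 - lam := by linarith
  nlinarith [mul_nonneg hν (pow_pos hμ 4).le, mul_nonneg hν (pow_pos hμ 3).le,
    mul_nonneg hν (pow_pos hμ 2).le, mul_nonneg hν hμ.le]

lemma pow_mul_abs_add_abs_lt (h : IsFibonacciTentOrbit lam c) {p : ℕ} (hp : 3 ≤ p) {j : ℕ}
    (hj : j < fib (p + 1)) :
    lam ^ j * |c (fib (p + 2))| + |c (fib (p + 2))| < |c (fib p)| := by
  have hlam := h.one_lt
  have hfib_p : 2 ≤ fib p := Nat.fib_mono (show 3 ≤ p by omega)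
  have hfib_p1 : 3 ≤ fib (p + 1) := Nat.fib_mono (show 4 ≤ p + 1 by omega)
  set Y := |c (fib (p + 2))|
  set B := |c (fib (p + 1))|
  have hYB : lam ^ 3 * Y < 2 * B := calc
    lam ^ 3 * Y ≤ lam ^ fib (p + 1) * Y := by gcongr; exact hlam.le
    _ < 2 * B := h.pow_fib_mul_abs_lt (by omega)
  have hBC : lam ^ 2 * B < 2 * |c (fib p)| := calc
    lam ^ 2 * B ≤ lam ^ fib p * B := by gcongr; exact hlam.le
    _ < 2 * |c (fib p)| := h.pow_fib_mul_abs_lt (by omega)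
  refine lt_of_mul_lt_mul_left ?_ (zero_le_one.trans hlam.le)
  calc lam * (lam ^ j * Y + Y) = lam ^ (j + 1) * Y + lam * Y := by ring
    _ ≤ lam ^ fib (p + 1) * Y + lam * Y := by gcongr; exacts [hlam.le, hj]
    _ = |c (fib (p + 3))| + B + lam * Y := by rw [← h.abs_fib_add_two_add_abs_fib (by omega)]
    _ < (1 + lam) * Y + B := by linarith [h.abs_fib_succ_lt (p + 2) (by omega)]
    _ < lam * |c (fib p)| :=
      add_mul_add_lt_mul_of_pow_mul_lt h.seventeen_tenths_lt (abs_nonneg _) hYB hBC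

theorem abs_fib_succ_lt_abs (h : IsFibonacciTentOrbit lam c) (h34 : |c 3| < |c 4|) (n : ℕ) :
    ∀ i, 0 < i → i < fib (n + 2) → i ≠ fib (n + 1) → |c (fib (n + 1))| < |c i| := by
  induction n using Nat.strong_induction_on with
  | _ n ih =>
  have hweak : ∀ m, 1 ≤ m → m ≤ n → ∀ i, 0 < i → i < fib (m + 1) → |c (fib m)| ≤ |c i| := by
    intro m hm hmn i hi₀ hi
    obtain ⟨m, rfl⟩ := Nat.exists_eq_add_of_le' hm
    rcases eq_or_ne i (fib (m + 1)) with rfl | hne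
    · exact le_rfl
    · exact (ih m (by omega) i hi₀ hi hne).le
  intro i hi₀ hin hne
  rcases hne.lt_or_gt with hlt | hgt
  · have hn : 2 ≤ n := by
      have := (Nat.fib_lt_fib le_rfl).1 (show fib 2 < fib (n + 1) by rw [Nat.fib_two]; omega)
      omega
    exact (h.abs_fib_succ_lt n hn).trans_le (hweak n (by omega) le_rfl i hi₀ hlt)
  obtain ⟨j, hj₀, rfl⟩ : ∃ j, 0 < j ∧ i = fib (n + 1) + j := ⟨i - fib (n + 1), by omega, by omega⟩
  have hjn : j < fib n := by rw [Nat.fib_add_two] at hin; omega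
  have hn : 3 ≤ n := by
    have := (Nat.fib_lt_fib le_rfl).1 (show fib 2 < fib n by rw [Nat.fib_two]; omega)
    omega
  rcases hn.eq_or_lt with rfl | hn
  · obtain rfl : j = 1 := by norm_num [Nat.fib_add_two] at hjn; omega
    simpa [Nat.fib_add_two] using h34
  obtain ⟨p, rfl⟩ : ∃ p, n = p + 1 := ⟨n - 1, by omega⟩
  have hshadow := abs_orbit_add_sub_eq_pow_mul (by linarith [h.one_lt]) h.zero h.succ
    (h.sign_shadow (p + 1) (by omega)) j hjn.le
  have htri := abs_sub_abs_le_abs_sub (c j) (c (fib (p + 2) + j))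
  rw [abs_sub_comm, hshadow] at htri
  linarith [h.pow_mul_abs_add_abs_lt (p := p) (by omega) hjn,
    hweak p (by omega) (by omega) j hj₀ hjn]

end IsFibonacciTentOrbit

theorem closest_returns_at_fibonacci_times_general
    (lam : ℝ) (hlam1 : 1 < lam)
    (T : ℝ → ℝ) (hT : ∀ x : ℝ, T x = lam * (1 - |x|) - 1)
    (c : ℕ → ℝ) (hc : ∀ i : ℕ, c i = T^[i] 0)
    (S : ℤ → ℕ) (hSm2 : S (-2) = 0) (hSm1 : S (-1) = 1)
    (hSrec : ∀ k : ℤ, 0 ≤ k → S k = S (k - 1) + S (k - 2))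
    (hsame : ∀ k : ℤ, 2 ≤ k → ∀ j : ℕ, 1 ≤ j → j < S (k - 2) →
      (0 < c (S (k - 1) + j) ↔ 0 < c j))
    (hopp : ∀ k : ℤ, 2 ≤ k → (0 < c (S k) ↔ c (S (k - 2)) < 0))
    (hdec : ∀ k : ℤ, 0 ≤ k → |c (S (k + 1))| < |c (S k)|)
    (hc34 : |c 3| < |c 4|) :
    ∀ k : ℤ, 0 ≤ k → ∀ i : ℕ, 0 < i → i < S k → i ≠ S (k - 1) →
      |c (S (k - 1))| < |c i| := by
  have hS (n : ℕ) (k : ℤ) (hk : k = n - 2) : S k = fib n :=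
    hk ▸ eq_fib_of_recurrence hSm2 hSm1 hSrec n
  have h : IsFibonacciTentOrbit lam c :=
    { one_lt := hlam1
      zero := by simpa using hc 0
      succ := fun n => by rw [hc, Function.iterate_succ_apply', ← hc, hT]
      sign_shadow := fun k hk j hj hjk => by
        have := hsame k (by exact_mod_cast hk) j hj (by rwa [hS k (k - 2) rfl])
        rwa [hS (k + 1) (k - 1) (by push_cast; ring)] at this
      sign_flip := fun k hk => by
        have := hopp k (by exact_mod_cast hk)
        rwa [hS k (k - 2) rfl, hS (k + 2) k (by push_cast; ring)] at this
      abs_fib_succ_lt := fun k hk => by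
        have := hdec (k - 2) (by omega)
        rwa [hS k (k - 2) rfl, hS (k + 1) (k - 2 + 1) (by push_cast; ring)] at this }
  intro k hk i hi₀ hik hne
  lift k to ℕ using hk
  rw [hS (k + 2) k (by push_cast; ring)] at hik
  rw [hS (k + 1) (k - 1) (by push_cast; ring)] at hne ⊢
  exact h.abs_fib_succ_lt_abs hc34 k i hi₀ hik hne

theorem closest_returns_at_fibonacci_times
    (lam : ℝ) (hlam1 : 1 < lam) (hlam2 : lam ≤ 2)
    (T : ℝ → ℝ) (hT : ∀ x : ℝ, T x = lam * (1 - |x|) - 1)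
    (c : ℕ → ℝ) (hc : ∀ i : ℕ, c i = T^[i] 0)
    (S : ℤ → ℕ) (hSm2 : S (-2) = 0) (hSm1 : S (-1) = 1)
    (hSrec : ∀ k : ℤ, 0 ≤ k → S k = S (k - 1) + S (k - 2))
    (hcne : ∀ j : ℕ, 1 ≤ j → c j ≠ 0)
    (hc2neg : c 2 < 0) (hc1pos : 0 < c 1)
    (hsame : ∀ k : ℤ, 2 ≤ k → ∀ j : ℕ, 1 ≤ j → j < S (k - 2) →
      (0 < c (S (k - 1) + j) ↔ 0 < c j))
    (hopp : ∀ k : ℤ, 2 ≤ k → (0 < c (S k) ↔ c (S (k - 2)) < 0))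
    (hdec : ∀ k : ℤ, 0 ≤ k → |c (S (k + 1))| < |c (S k)|)
    (hc34 : |c 3| < |c 4|) :
    ∀ k : ℤ, 0 ≤ k → ∀ i : ℕ, 0 < i → i < S k → i ≠ S (k - 1) →
      |c (S (k - 1))| < |c i| :=
  closest_returns_at_fibonacci_times_general lam hlam1 T hT c hc S hSm2 hSm1 hSrec hsame hopp hdec
    hc34
end

section
/- For all 0 ≤ k < m one has c_{S(k)+1} < c_{S(m)+1} < c_1. Moreover, for every k ≥ 1 and every j with 1 ≤ j ≤ S(k−1) − 1, the map T^j is injective on the interval [c_1, c_{S(k)+1}], and T^j([c_1, c_{S(k)+1}]) = [c_{j+1}, c_{S(k)+1+j}]; in particular I_k^{j+1} = [c_{j+1}, c_{S(k)+1+j}]. -/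
open Set

/-!
Write `T x = c₁ - λ|x|`, so that `c (n + 1) = c₁ - λ|c n|`; the first claim is then the strict
decrease of `|c (S k)|`. On an interval whose endpoints lie on the same side of `0` the map `T` is
affine, hence injective with `T [a, b] = [T a, T b]`. The recurrence hypothesis says that the
endpoints `c (i + 1)` and `c (S k + 1 + i)` of `T^[i] [c₁, c (S k + 1)]` stay on the same side of
`0` as long as `i < S (k - 1)`, which gives the second claim by induction. Finally the signs of
`c (S k)` follow the pattern `+, -, -, +, +, -, …`, so `I k` contains `0` and its endpoint of
largest modulus is `c (S k)`; hence `T (I k) = [c (S k + 1), c₁]`.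
-/

theorem iterate_injOn_and_image_uIcc {α : Type*} [Lattice α] {f : α → α} {P : α → α → Prop}
    (hf : ∀ x y, P x y → InjOn f (uIcc x y) ∧ f '' uIcc x y = uIcc (f x) (f y))
    {p q : α} {n : ℕ} (hP : ∀ i < n, P (f^[i] p) (f^[i] q)) :
    InjOn f^[n] (uIcc p q) ∧ f^[n] '' uIcc p q = uIcc (f^[n] p) (f^[n] q) := by
  induction n with
  | zero => simp [injOn_id]
  | succ n ih =>
    obtain ⟨hinj, himg⟩ := ih fun i hi => hP i (by omega)
    obtain ⟨hinjf, himgf⟩ := hf _ _ (hP n n.lt_add_one)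
    rw [Function.iterate_succ', image_comp, himg, himgf]
    exact ⟨hinjf.comp hinj (himg ▸ mapsTo_image _ _), rfl⟩

theorem injOn_and_image_uIcc_of_eqOn_affine {f : ℝ → ℝ} {p q x y : ℝ} (hp : p ≠ 0)
    (h : EqOn f (fun z => p * z + q) (uIcc x y)) :
    InjOn f (uIcc x y) ∧ f '' uIcc x y = uIcc (f x) (f y) := by
  refine ⟨((add_left_injective q).comp (mul_right_injective₀ hp)).injOn.congr h.symm, ?_⟩
  rw [h.image_eq, h left_mem_uIcc, h right_mem_uIcc, show (fun z => p * z + q) = (· + q) ∘ (p * ·)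
    from rfl, image_comp, image_const_mul_uIcc, image_add_const_uIcc]
  rfl

theorem zero_mem_uIcc_of_mul_nonpos {R : Type*} [Ring R] [LinearOrder R] [IsStrictOrderedRing R]
    {x y : R} (h : x * y ≤ 0) : (0 : R) ∈ uIcc x y := by
  refine ⟨inf_le_iff.2 ?_, le_sup_iff.2 ?_⟩ <;> by_contra! h'
  · exact (mul_pos h'.1 h'.2).not_ge h
  · exact (mul_pos_of_neg_of_neg h'.1 h'.2).not_ge h

section TentMap

variable {T : ℝ → ℝ} {a l : ℝ}

theorem tent_lt_of_abs_lt (hl : 0 < l) (hT : ∀ x, T x = a - l * |x|) {x y : ℝ} (h : |y| < |x|) :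
    T x < T y := by
  rw [hT, hT]
  gcongr

theorem tent_le_of_abs_le (hl : 0 ≤ l) (hT : ∀ x, T x = a - l * |x|) {x y : ℝ} (h : |y| ≤ |x|) :
    T x ≤ T y := by
  rw [hT, hT]
  gcongr

theorem tent_injOn_and_image_uIcc (hl : 0 < l) (hT : ∀ x, T x = a - l * |x|) {x y : ℝ}
    (hxy : 0 < x ↔ 0 < y) : InjOn T (uIcc x y) ∧ T '' uIcc x y = uIcc (T x) (T y) := by
  by_cases hx : 0 < x
  · refine injOn_and_image_uIcc_of_eqOn_affine (neg_ne_zero.2 hl.ne') (q := a) fun z hz => ?_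
    have hz0 : 0 ≤ z := (le_inf hx.le (hxy.1 hx).le).trans hz.1
    rw [hT, abs_of_nonneg hz0]
    ring
  · refine injOn_and_image_uIcc_of_eqOn_affine hl.ne' (q := a) fun z hz => ?_
    have hz0 : z ≤ 0 := hz.2.trans (sup_le (not_lt.1 hx) (not_lt.1 (hxy.not.1 hx)))
    rw [hT, abs_of_nonpos hz0]
    ring

theorem tent_image_uIcc_of_zero_mem (hl : 0 ≤ l) (hT : ∀ x, T x = a - l * |x|) {x y : ℝ}
    (h0 : 0 ∈ uIcc x y) (hyx : |y| ≤ |x|) : T '' uIcc x y = uIcc (T 0) (T x) := by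
  have hT0 : ∀ z, T z ≤ T 0 := fun z => tent_le_of_abs_le hl hT (by simp)
  refine Subset.antisymm ?_ ?_
  · rintro _ ⟨z, hz, rfl⟩
    rw [uIcc_of_ge (hT0 x)]
    refine ⟨tent_le_of_abs_le hl hT ?_, hT0 z⟩
    rcases mem_uIcc.1 hz with ⟨h₁, h₂⟩ | ⟨h₁, h₂⟩
    · exact (abs_le_max_abs_abs h₁ h₂).trans (max_le le_rfl hyx)
    · exact (abs_le_max_abs_abs h₁ h₂).trans (max_le hyx le_rfl)
  · have hcont : Continuous T := by
      rw [funext hT]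
      fun_prop
    rw [uIcc_comm]
    exact (intermediate_value_uIcc hcont.continuousOn).trans
      (image_mono (uIcc_subset_uIcc left_mem_uIcc h0))

end TentMap

section FibonacciRecurrence

variable {c : ℕ → ℝ} {S : ℤ → ℕ}

theorem fib_zero_one (hSm2 : S (-2) = 0) (hSm1 : S (-1) = 1)
    (hSrec : ∀ k : ℤ, 0 ≤ k → S k = S (k - 1) + S (k - 2)) : S 0 = 1 ∧ S 1 = 2 := by
  have h0 := hSrec 0 le_rfl
  have h1 := hSrec 1 zero_le_one
  norm_num [hSm2, hSm1] at h0 h1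
  exact ⟨h0, by rw [h1, h0]⟩

theorem one_le_fib (hSm1 : S (-1) = 1) (hSrec : ∀ k : ℤ, 0 ≤ k → S k = S (k - 1) + S (k - 2))
    {k : ℤ} (hk : -1 ≤ k) : 1 ≤ S k := by
  induction k, hk using Int.leInduction with
  | base => rw [hSm1]
  | succ k hk ih =>
    rw [hSrec (k + 1) (by omega), add_sub_cancel_right]
    omega

theorem abs_fib_orbit_lt (hdec : ∀ k : ℤ, 0 ≤ k → |c (S (k + 1))| < |c (S k)|) {k m : ℤ}
    (hk : 0 ≤ k) (hkm : k < m) : |c (S m)| < |c (S k)| :=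
  strictAntiOn_Ici_of_lt_pred (ψ := fun k => |c (S k)|) (fun m hm => by
    simpa [Order.pred_eq_sub_one] using hdec (m - 1) (by omega)) hk (mem_Ici.2 (by omega)) hkm

theorem fib_orbit_mul_add_two_neg (hc0 : ∀ k : ℤ, 0 ≤ k → c (S k) ≠ 0)
    (hopp : ∀ k : ℤ, 2 ≤ k → (0 < c (S k) ↔ c (S (k - 2)) < 0)) {k : ℤ} (hk : 0 ≤ k) :
    c (S k) * c (S (k + 2)) < 0 := by
  have h := hopp (k + 2) (by omega)
  rw [add_sub_cancel_right] at h
  rcases (hc0 k hk).lt_or_gt with hneg | hpos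
  · exact mul_neg_of_neg_of_pos hneg (h.2 hneg)
  · exact mul_neg_of_pos_of_neg hpos
      ((not_lt.1 fun h' => (h.1 h').not_gt hpos).lt_of_ne (hc0 _ (by omega)))

theorem fib_orbit_mul_add_one_neg_of_even (hc0 : ∀ k : ℤ, 0 ≤ k → c (S k) ≠ 0)
    (hopp : ∀ k : ℤ, 2 ≤ k → (0 < c (S k) ↔ c (S (k - 2)) < 0)) (hS0 : S 0 = 1) (hS1 : S 1 = 2)
    (hc1 : 0 < c 1) (hc2 : c 2 < 0) {k : ℤ} (hk : 0 ≤ k) (he : Even k) :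
    c (S k) * c (S (k + 1)) < 0 := by
  obtain ⟨n, rfl⟩ := he
  lift n to ℕ using (by omega)
  induction n with
  | zero => simpa [hS0, hS1] using mul_neg_of_pos_of_neg hc1 hc2
  | succ n ih =>
    have h₀ := fib_orbit_mul_add_two_neg hc0 hopp (k := n + n) (by omega)
    have h₁ := fib_orbit_mul_add_two_neg hc0 hopp (k := n + n + 1) (by omega)
    rw [show ((n + 1 : ℕ) : ℤ) + (n + 1 : ℕ) = n + n + 2 by push_cast; ring,
      show (n : ℤ) + n + 2 + 1 = n + n + 1 + 2 by ring]
    nlinarith [mul_pos_of_neg_of_neg h₀ h₁, ih (by omega)]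

end FibonacciRecurrence

theorem iterates_injective_on_intervals_general
    (lam : ℝ) (hlam1 : 1 < lam)
    (T : ℝ → ℝ) (hT : ∀ x : ℝ, T x = lam * (1 - |x|) - 1)
    (c : ℕ → ℝ) (hc : ∀ i : ℕ, c i = T^[i] 0)
    (S : ℤ → ℕ) (hSm2 : S (-2) = 0) (hSm1 : S (-1) = 1)
    (hSrec : ∀ k : ℤ, 0 ≤ k → S k = S (k - 1) + S (k - 2))
    (hcne : ∀ j : ℕ, 1 ≤ j → c j ≠ 0)
    (hc2neg : c 2 < 0) (hc1pos : 0 < c 1)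
    (hsame : ∀ k : ℤ, 2 ≤ k → ∀ j : ℕ, 1 ≤ j → j < S (k - 2) →
      (0 < c (S (k - 1) + j) ↔ 0 < c j))
    (hopp : ∀ k : ℤ, 2 ≤ k → (0 < c (S k) ↔ c (S (k - 2)) < 0))
    (hdec : ∀ k : ℤ, 0 ≤ k → |c (S (k + 1))| < |c (S k)|)
    (I : ℤ → Set ℝ)
    (hIdef : ∀ k : ℤ, 0 ≤ k →
      (Even k → I k = Set.uIcc (c (S k)) (c (S (k + 1)))) ∧
      (¬ Even k → I k = Set.uIcc (c (S k)) (c (S (k + 2))))) :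
    (∀ k m : ℤ, 0 ≤ k → k < m → c (S k + 1) < c (S m + 1) ∧ c (S m + 1) < c 1) ∧
    (∀ k : ℤ, 1 ≤ k → ∀ j : ℕ, 1 ≤ j → j < S (k - 1) →
      Set.InjOn (T^[j]) (Set.uIcc (c 1) (c (S k + 1))) ∧
      T^[j] '' Set.uIcc (c 1) (c (S k + 1)) = Set.uIcc (c (j + 1)) (c (S k + 1 + j)) ∧
      T^[j + 1] '' I k = Set.uIcc (c (j + 1)) (c (S k + 1 + j))) := by
  have hl : 0 < lam := by linarith
  have hT' : ∀ x, T x = (lam - 1) - lam * |x| := fun x => by rw [hT]; ring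
  have horbit : ∀ m i, T^[i] (c m) = c (m + i) := fun m i => by
    rw [hc, hc, add_comm, Function.iterate_add_apply]
  have hc1 : T 0 = c 1 := by rw [hc 1]; rfl
  obtain ⟨hS0, hS1⟩ := fib_zero_one hSm2 hSm1 hSrec
  have hc0 : ∀ k : ℤ, 0 ≤ k → c (S k) ≠ 0 := fun k hk => hcne _ (one_le_fib hSm1 hSrec (by omega))
  refine ⟨fun k m hk hkm => ?_, fun k hk j _ hjk => ?_⟩
  · rw [← horbit _ 1, ← horbit _ 1, ← hc1]
    exact ⟨tent_lt_of_abs_lt hl hT' (abs_fib_orbit_lt hdec hk hkm),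
      tent_lt_of_abs_lt hl hT' (by simpa using hc0 m (by omega))⟩
  have hside : ∀ i < j, (0 < T^[i] (c 1) ↔ 0 < T^[i] (c (S k + 1))) := fun i hi => by
    have h := hsame (k + 1) (by omega) (i + 1) (by omega)
      (by rw [show k + 1 - 2 = k - 1 by ring]; omega)
    rw [add_sub_cancel_right] at h
    rw [horbit, horbit, add_comm 1, add_assoc, add_comm 1, h]
  obtain ⟨hinj, himg⟩ := iterate_injOn_and_image_uIcc
    (fun _ _ => tent_injOn_and_image_uIcc hl hT') hside
  rw [horbit, horbit, add_comm 1] at himg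
  have hI : T '' I k = uIcc (c 1) (c (S k + 1)) := by
    rw [← hc1, ← horbit _ 1]
    by_cases he : Even k
    · rw [(hIdef k (by omega)).1 he]
      exact tent_image_uIcc_of_zero_mem hl.le hT' (zero_mem_uIcc_of_mul_nonpos
        (fib_orbit_mul_add_one_neg_of_even hc0 hopp hS0 hS1 hc1pos hc2neg (by omega) he).le)
        (abs_fib_orbit_lt hdec (by omega) (by omega)).le
    · rw [(hIdef k (by omega)).2 he]
      exact tent_image_uIcc_of_zero_mem hl.le hT' (zero_mem_uIcc_of_mul_nonpos
        (fib_orbit_mul_add_two_neg hc0 hopp (by omega)).le)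
        (abs_fib_orbit_lt hdec (by omega) (by omega)).le
  refine ⟨hinj, himg, ?_⟩
  rw [Function.iterate_succ, image_comp, hI, himg]

theorem iterates_injective_on_intervals
    (lam : ℝ) (hlam1 : 1 < lam) (hlam2 : lam ≤ 2)
    (T : ℝ → ℝ) (hT : ∀ x : ℝ, T x = lam * (1 - |x|) - 1)
    (c : ℕ → ℝ) (hc : ∀ i : ℕ, c i = T^[i] 0)
    (S : ℤ → ℕ) (hSm2 : S (-2) = 0) (hSm1 : S (-1) = 1)
    (hSrec : ∀ k : ℤ, 0 ≤ k → S k = S (k - 1) + S (k - 2))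
    (hcne : ∀ j : ℕ, 1 ≤ j → c j ≠ 0)
    (hc2neg : c 2 < 0) (hc1pos : 0 < c 1)
    (hsame : ∀ k : ℤ, 2 ≤ k → ∀ j : ℕ, 1 ≤ j → j < S (k - 2) →
      (0 < c (S (k - 1) + j) ↔ 0 < c j))
    (hopp : ∀ k : ℤ, 2 ≤ k → (0 < c (S k) ↔ c (S (k - 2)) < 0))
    (hdec : ∀ k : ℤ, 0 ≤ k → |c (S (k + 1))| < |c (S k)|)
    (hc34 : |c 3| < |c 4|)
    (I : ℤ → Set ℝ)
    (hIdef : ∀ k : ℤ, 0 ≤ k →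
      (Even k → I k = Set.uIcc (c (S k)) (c (S (k + 1)))) ∧
      (¬ Even k → I k = Set.uIcc (c (S k)) (c (S (k + 2))))) :
    (∀ k m : ℤ, 0 ≤ k → k < m → c (S k + 1) < c (S m + 1) ∧ c (S m + 1) < c 1) ∧
    (∀ k : ℤ, 1 ≤ k → ∀ j : ℕ, 1 ≤ j → j < S (k - 1) →
      Set.InjOn (T^[j]) (Set.uIcc (c 1) (c (S k + 1))) ∧
      T^[j] '' Set.uIcc (c 1) (c (S k + 1)) = Set.uIcc (c (j + 1)) (c (S k + 1 + j)) ∧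
      T^[j + 1] '' I k = Set.uIcc (c (j + 1)) (c (S k + 1 + j))) :=
  iterates_injective_on_intervals_general lam hlam1 T hT c hc S hSm2 hSm1 hSrec hcne hc2neg hc1pos
    hsame hopp hdec I hIdef
end

section
/- For every k ≥ 0: c_{S(k)} > 0 if k ≡ 0 or 3 (mod 4), and c_{S(k)} < 0 if k ≡ 1 or 2 (mod 4). Consequently, the smallest closed interval containing the set {c_{S(l)} : l ≥ k} equals [c_{S(k)}, c_{S(k+1)}] when k is even and equals [c_{S(k)}, c_{S(k+2)}] when k is odd. -/
open MeasureTheory Filter Set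

theorem sides_of_fibonacci_returns_and_hull
    (lam : ℝ) (hlam1 : 1 < lam) (hlam2 : lam ≤ 2)
    (T : ℝ → ℝ) (hT : ∀ x : ℝ, T x = lam * (1 - |x|) - 1)
    (c : ℕ → ℝ) (hc : ∀ i : ℕ, c i = T^[i] 0)
    (S : ℤ → ℕ) (hSm2 : S (-2) = 0) (hSm1 : S (-1) = 1)
    (hSrec : ∀ k : ℤ, 0 ≤ k → S k = S (k - 1) + S (k - 2))
    (hcne : ∀ j : ℕ, 1 ≤ j → c j ≠ 0)
    (hc2neg : c 2 < 0) (hc1pos : 0 < c 1)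
    (hsame : ∀ k : ℤ, 2 ≤ k → ∀ j : ℕ, 1 ≤ j → j < S (k - 2) →
      (0 < c (S (k - 1) + j) ↔ 0 < c j))
    (hopp : ∀ k : ℤ, 2 ≤ k → (0 < c (S k) ↔ c (S (k - 2)) < 0))
    (hdec : ∀ k : ℤ, 0 ≤ k → |c (S (k + 1))| < |c (S k)|)
    (hc34 : |c 3| < |c 4|) :
    (∀ k : ℤ, 0 ≤ k →
      ((k % 4 = 0 ∨ k % 4 = 3) → 0 < c (S k)) ∧
      ((k % 4 = 1 ∨ k % 4 = 2) → c (S k) < 0)) ∧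
    (∀ k : ℤ, 0 ≤ k →
      (Even k → Set.uIcc (c (S k)) (c (S (k + 1))) =
        ⋂₀ {A : Set ℝ | (∃ a b : ℝ, A = Set.Icc a b) ∧
          {x : ℝ | ∃ l : ℤ, k ≤ l ∧ x = c (S l)} ⊆ A}) ∧
      (¬ Even k → Set.uIcc (c (S k)) (c (S (k + 2))) =
        ⋂₀ {A : Set ℝ | (∃ a b : ℝ, A = Set.Icc a b) ∧
          {x : ℝ | ∃ l : ℤ, k ≤ l ∧ x = c (S l)} ⊆ A})) := by
  -- basic values of S
  have hS0 : S 0 = 1 := by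
    have h := hSrec 0 le_rfl
    norm_num [hSm1, hSm2] at h
    exact h
  have hS1 : S 1 = 2 := by
    have h := hSrec 1 (by norm_num)
    norm_num [hSm1, hS0] at h
    omega
  -- positivity of S
  have SposAux : ∀ k : ℤ, -1 ≤ k → 1 ≤ S k ∧ 1 ≤ S (k + 1) := by
    refine Int.le_induction ?_ ?_
    · constructor
      · rw [hSm1]
      · norm_num [hS0]
    · intro k hk ih
      refine ⟨ih.2, ?_⟩
      have h := hSrec (k + 1 + 1) (by omega)
      have e1 : k + 1 + 1 - 1 = k + 1 := by ring
      have e2 : k + 1 + 1 - 2 = k := by ring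
      rw [e1, e2] at h
      omega
  have Spos : ∀ k : ℤ, 0 ≤ k → 1 ≤ S k := fun k hk => (SposAux k (by omega)).1
  -- sign lemma over ℕ
  have signN : ∀ n : ℕ,
      (((n : ℤ) % 4 = 0 ∨ (n : ℤ) % 4 = 3) → 0 < c (S (n : ℤ))) ∧
      (((n : ℤ) % 4 = 1 ∨ (n : ℤ) % 4 = 2) → c (S (n : ℤ)) < 0) := by
    intro n
    induction n using Nat.strong_induction_on with
    | _ n ih =>
      match n, ih with
      | 0, _ =>
        refine ⟨fun _ => ?_, fun h => ?_⟩
        · norm_num [hS0]; exact hc1pos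
        · norm_num at h
      | 1, _ =>
        refine ⟨fun h => ?_, fun _ => ?_⟩
        · norm_num at h
        · norm_num [hS1]; exact hc2neg
      | (m + 2), ih =>
        have ihm := ih m (by omega)
        have h := hopp ((m : ℤ) + 2) (by omega)
        have e : (m : ℤ) + 2 - 2 = (m : ℤ) := by ring
        rw [e] at h
        have hne : c (S ((m : ℤ) + 2)) ≠ 0 := hcne _ (Spos _ (by positivity))
        push_cast
        have hm4 : (m : ℤ) % 4 = 0 ∨ (m : ℤ) % 4 = 1 ∨ (m : ℤ) % 4 = 2 ∨ (m : ℤ) % 4 = 3 := by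
          omega
        rcases hm4 with hm | hm | hm | hm
        · -- c (S m) > 0, so c (S (m+2)) < 0 ; (m+2)%4 = 2
          have hpos := ihm.1 (Or.inl hm)
          have hneg : c (S ((m : ℤ) + 2)) < 0 := by
            rcases lt_or_gt_of_ne hne with h' | h'
            · exact h'
            · exact absurd (h.mp h') (by linarith)
          exact ⟨fun h4 => by omega, fun _ => hneg⟩
        · -- c (S m) < 0, so c (S (m+2)) > 0 ; (m+2)%4 = 3
          have hneg := ihm.2 (Or.inl hm)
          have hpos : 0 < c (S ((m : ℤ) + 2)) := h.mpr hneg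
          exact ⟨fun _ => hpos, fun h4 => by omega⟩
        · -- c (S m) < 0, so c (S (m+2)) > 0 ; (m+2)%4 = 0
          have hneg := ihm.2 (Or.inr hm)
          have hpos : 0 < c (S ((m : ℤ) + 2)) := h.mpr hneg
          exact ⟨fun _ => hpos, fun h4 => by omega⟩
        · -- c (S m) > 0, so c (S (m+2)) < 0 ; (m+2)%4 = 1
          have hpos := ihm.1 (Or.inr hm)
          have hneg : c (S ((m : ℤ) + 2)) < 0 := by
            rcases lt_or_gt_of_ne hne with h' | h'
            · exact h'
            · exact absurd (h.mp h') (by linarith)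
          exact ⟨fun h4 => by omega, fun _ => hneg⟩
  have sign : ∀ k : ℤ, 0 ≤ k →
      ((k % 4 = 0 ∨ k % 4 = 3) → 0 < c (S k)) ∧
      ((k % 4 = 1 ∨ k % 4 = 2) → c (S k) < 0) := by
    intro k hk
    have h := signN k.toNat
    rwa [Int.toNat_of_nonneg hk] at h
  -- monotonicity of |c (S ·)|
  have mono : ∀ k : ℤ, 0 ≤ k → ∀ l : ℤ, k ≤ l → |c (S l)| ≤ |c (S k)| := by
    intro k hk
    refine Int.le_induction ?_ ?_
    · exact le_rfl
    · intro l hkl ih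
      exact le_trans (le_of_lt (hdec l (le_trans hk hkl))) ih
  -- membership helper
  have memIcc : ∀ p q l : ℤ, 0 ≤ p → 0 ≤ q → 0 < c (S p) → c (S q) < 0 →
      ((0 < c (S l) ∧ p ≤ l) ∨ (c (S l) < 0 ∧ q ≤ l)) →
      c (S l) ∈ Set.uIcc (c (S p)) (c (S q)) := by
    intro p q l hp hq hpc hqc h
    rw [Set.mem_uIcc]
    refine Or.inr ⟨?_, ?_⟩
    · rcases h with ⟨hx, _⟩ | ⟨hx, hql⟩
      · linarith
      · have hm := mono q hq l hql
        have h1 : |c (S l)| = -c (S l) := abs_of_neg hx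
        have h2 : |c (S q)| = -c (S q) := abs_of_neg hqc
        linarith
    · rcases h with ⟨hx, hpl⟩ | ⟨hx, _⟩
      · have hm := mono p hp l hpl
        have h1 : |c (S p)| = c (S p) := abs_of_pos hpc
        linarith [le_abs_self (c (S l))]
      · linarith
  -- hull equality helper
  have hullEq : ∀ (u v : ℝ) (s : Set ℝ), u ∈ s → v ∈ s → s ⊆ Set.uIcc u v →
      Set.uIcc u v = ⋂₀ {A : Set ℝ | (∃ a b : ℝ, A = Set.Icc a b) ∧ s ⊆ A} := by
    intro u v s hu hv hsub
    apply Set.Subset.antisymm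
    · intro x hx
      rw [Set.mem_sInter]
      rintro A ⟨⟨a, b, rfl⟩, hsA⟩
      have h1 := hsA hu
      have h2 := hsA hv
      rw [Set.mem_Icc] at h1 h2 ⊢
      rw [Set.mem_uIcc] at hx
      constructor <;> rcases hx with ⟨h3, h4⟩ | ⟨h3, h4⟩ <;>
        [linarith [h1.1]; linarith [h2.1]; linarith [h2.2]; linarith [h1.2]]
    · exact Set.sInter_subset_of_mem ⟨⟨u ⊓ v, u ⊔ v, rfl⟩, hsub⟩
  refine ⟨sign, ?_⟩
  intro k hk
  constructor
  · -- Even case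
    intro hpar
    rw [Int.even_iff] at hpar
    have hk4 : k % 4 = 0 ∨ k % 4 = 2 := by omega
    rcases hk4 with hk4 | hk4
    · -- k % 4 = 0 : c (S k) > 0, c (S (k+1)) < 0
      have cp : 0 < c (S k) := (sign k hk).1 (Or.inl hk4)
      have cq : c (S (k + 1)) < 0 := (sign (k + 1) (by omega)).2 (Or.inl (by omega))
      refine hullEq _ _ _ ⟨k, le_rfl, rfl⟩ ⟨k + 1, by omega, rfl⟩ ?_
      rintro x ⟨l, hl, rfl⟩
      have hl0 : 0 ≤ l := le_trans hk hl
      have hl4 : l % 4 = 0 ∨ l % 4 = 1 ∨ l % 4 = 2 ∨ l % 4 = 3 := by omega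
      rcases hl4 with h4 | h4 | h4 | h4
      · exact memIcc k (k + 1) l hk (by omega) cp cq (Or.inl ⟨(sign l hl0).1 (Or.inl h4), hl⟩)
      · exact memIcc k (k + 1) l hk (by omega) cp cq (Or.inr ⟨(sign l hl0).2 (Or.inl h4), by omega⟩)
      · exact memIcc k (k + 1) l hk (by omega) cp cq (Or.inr ⟨(sign l hl0).2 (Or.inr h4), by omega⟩)
      · exact memIcc k (k + 1) l hk (by omega) cp cq (Or.inl ⟨(sign l hl0).1 (Or.inr h4), hl⟩)
    · -- k % 4 = 2 : c (S k) < 0, c (S (k+1)) > 0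
      have cq : c (S k) < 0 := (sign k hk).2 (Or.inr hk4)
      have cp : 0 < c (S (k + 1)) := (sign (k + 1) (by omega)).1 (Or.inr (by omega))
      rw [Set.uIcc_comm]
      refine hullEq _ _ _ ⟨k + 1, by omega, rfl⟩ ⟨k, le_rfl, rfl⟩ ?_
      rintro x ⟨l, hl, rfl⟩
      have hl0 : 0 ≤ l := le_trans hk hl
      have hl4 : l % 4 = 0 ∨ l % 4 = 1 ∨ l % 4 = 2 ∨ l % 4 = 3 := by omega
      rcases hl4 with h4 | h4 | h4 | h4
      · exact memIcc (k + 1) k l (by omega) hk cp cq (Or.inl ⟨(sign l hl0).1 (Or.inl h4), by omega⟩)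
      · exact memIcc (k + 1) k l (by omega) hk cp cq (Or.inr ⟨(sign l hl0).2 (Or.inl h4), hl⟩)
      · exact memIcc (k + 1) k l (by omega) hk cp cq (Or.inr ⟨(sign l hl0).2 (Or.inr h4), hl⟩)
      · exact memIcc (k + 1) k l (by omega) hk cp cq (Or.inl ⟨(sign l hl0).1 (Or.inr h4), by omega⟩)
  · -- Odd case
    intro hpar
    rw [Int.not_even_iff] at hpar
    have hk4 : k % 4 = 1 ∨ k % 4 = 3 := by omega
    rcases hk4 with hk4 | hk4
    · -- k % 4 = 1 : c (S k) < 0, c (S (k+2)) > 0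
      have cq : c (S k) < 0 := (sign k hk).2 (Or.inl hk4)
      have cp : 0 < c (S (k + 2)) := (sign (k + 2) (by omega)).1 (Or.inr (by omega))
      rw [Set.uIcc_comm]
      refine hullEq _ _ _ ⟨k + 2, by omega, rfl⟩ ⟨k, le_rfl, rfl⟩ ?_
      rintro x ⟨l, hl, rfl⟩
      have hl0 : 0 ≤ l := le_trans hk hl
      have hl4 : l % 4 = 0 ∨ l % 4 = 1 ∨ l % 4 = 2 ∨ l % 4 = 3 := by omega
      rcases hl4 with h4 | h4 | h4 | h4
      · exact memIcc (k + 2) k l (by omega) hk cp cq (Or.inl ⟨(sign l hl0).1 (Or.inl h4), by omega⟩)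
      · exact memIcc (k + 2) k l (by omega) hk cp cq (Or.inr ⟨(sign l hl0).2 (Or.inl h4), hl⟩)
      · exact memIcc (k + 2) k l (by omega) hk cp cq (Or.inr ⟨(sign l hl0).2 (Or.inr h4), hl⟩)
      · exact memIcc (k + 2) k l (by omega) hk cp cq (Or.inl ⟨(sign l hl0).1 (Or.inr h4), by omega⟩)
    · -- k % 4 = 3 : c (S k) > 0, c (S (k+2)) < 0
      have cp : 0 < c (S k) := (sign k hk).1 (Or.inr hk4)
      have cq : c (S (k + 2)) < 0 := (sign (k + 2) (by omega)).2 (Or.inl (by omega))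
      refine hullEq _ _ _ ⟨k, le_rfl, rfl⟩ ⟨k + 2, by omega, rfl⟩ ?_
      rintro x ⟨l, hl, rfl⟩
      have hl0 : 0 ≤ l := le_trans hk hl
      have hl4 : l % 4 = 0 ∨ l % 4 = 1 ∨ l % 4 = 2 ∨ l % 4 = 3 := by omega
      rcases hl4 with h4 | h4 | h4 | h4
      · exact memIcc k (k + 2) l hk (by omega) cp cq (Or.inl ⟨(sign l hl0).1 (Or.inl h4), hl⟩)
      · exact memIcc k (k + 2) l hk (by omega) cp cq (Or.inr ⟨(sign l hl0).2 (Or.inl h4), by omega⟩)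
      · exact memIcc k (k + 2) l hk (by omega) cp cq (Or.inr ⟨(sign l hl0).2 (Or.inr h4), by omega⟩)
      · exact memIcc k (k + 2) l hk (by omega) cp cq (Or.inl ⟨(sign l hl0).1 (Or.inr h4), hl⟩)
end

section
/- For every k ≥ 0: J_{k+1} ⊆ D_k, 0 ∉ J_{k+1}, and J_{k+1} ∩ I_{k+1} = ∅. Consequently, for all integers 0 < k < k′: J_{k′} ⊆ D_{k′−1} ⊆ I_k, and J_k ∩ J_{k′} = ∅. -/
/-!
If the orbit of `c n` follows the itinerary of the turning point for `j` steps, the tent map is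
affine along both orbits, so `c (n + j) - c j = δ_j * |c n|` with a factor `δ_j` that depends on
`j` only and has `|δ_j| = lam ^ j`. For `j = S(k)` the same factor appears with `n = S(k+1)` and
with `n = S(k+2)`. The first gives the recurrence
`|c_{S(k+2)}| + |c_{S(k)}| = lam ^ S(k) * |c_{S(k+1)}|`, and, as `c_{S(k+2)}` and `c_{S(k)}` lie on
opposite sides of `0`, fixes the sign of `δ_j`. The second then places the far endpoint of
`J_{k+1}` on the side of `c_{S(k)}`, at distance `|c_{S(k)}| - lam ^ S(k) * |c_{S(k+2)}|` from `0`.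
Since the `|c_{S(k)}|` decrease and `lam ^ 2 > lam + 1`, the recurrence shows that this distance
exceeds `|c_{S(k+3)}|`, and `|c_{S(k+1)}|` when `k ≥ 1`, which bound the endpoint of `I_{k+1}` on
that side. So `J_{k+1}` lies in `D_k` but misses `0` and `I_{k+1}`, and the rest follows because
the `I_k` decrease and `D_k ⊆ I_k`.
-/

open Set

open Nat (fib)

lemma zero_mem_uIcc_of_pos_iff_neg {a b : ℝ} (h : 0 < b ↔ a < 0) : (0 : ℝ) ∈ uIcc a b := by
  rcases lt_or_ge a 0 with ha | ha
  · exact mem_uIcc_of_le ha.le (h.2 ha).le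
  · exact mem_uIcc_of_ge (not_lt.1 (mt h.1 ha.not_gt)) ha

lemma mem_uIcc_zero_of_abs_le {a x : ℝ} (hx : 0 < x ↔ 0 < a) (hxa : |x| ≤ |a|) :
    x ∈ uIcc 0 a := by
  rcases lt_or_ge 0 a with ha | ha
  · have hx' := hx.2 ha
    rw [abs_of_pos hx', abs_of_pos ha] at hxa
    exact mem_uIcc_of_le hx'.le hxa
  · have hx' := not_lt.1 (mt hx.1 ha.not_gt)
    rw [abs_of_nonpos hx', abs_of_nonpos ha] at hxa
    exact mem_uIcc_of_ge (by linarith) hx'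

lemma zero_notMem_uIcc_of_pos_iff {a w : ℝ} (ha : a ≠ 0) (hw : w ≠ 0) (h : 0 < w ↔ 0 < a) :
    (0 : ℝ) ∉ uIcc a w := by
  rcases ha.lt_or_gt with ha | ha
  · exact notMem_uIcc_of_gt ha (hw.lt_of_le (not_lt.1 (mt h.1 ha.not_gt)))
  · exact notMem_uIcc_of_lt ha (h.2 ha)

lemma disjoint_uIcc_of_abs_lt {a w u v : ℝ} (ha : a ≠ 0) (hw : 0 < w ↔ 0 < a)
    (hwa : |w| ≤ |a|) (hu : 0 < u ↔ 0 < a) (huw : |u| < |w|) (hv : 0 < v ↔ a < 0) :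
    Disjoint (uIcc a w) (uIcc u v) := by
  rw [Set.disjoint_left]
  intro z hz hz'
  rw [mem_uIcc] at hz hz'
  rcases ha.lt_or_gt with ha | ha
  · have hw' := not_lt.1 (mt hw.1 ha.not_gt)
    have hu' := not_lt.1 (mt hu.1 ha.not_gt)
    rw [abs_of_nonpos hw', abs_of_neg ha] at hwa
    rw [abs_of_nonpos hw', abs_of_nonpos hu'] at huw
    have hv' := hv.2 ha
    rcases hz with ⟨_, _⟩ | ⟨_, _⟩ <;> rcases hz' with ⟨_, _⟩ | ⟨_, _⟩ <;> linarith
  · have hw' := hw.2 ha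
    have hu' := hu.2 ha
    rw [abs_of_pos hw', abs_of_pos ha] at hwa
    rw [abs_of_pos hw', abs_of_pos hu'] at huw
    have hv' := not_lt.1 (mt hv.1 ha.not_gt)
    rcases hz with ⟨_, _⟩ | ⟨_, _⟩ <;> rcases hz' with ⟨_, _⟩ | ⟨_, _⟩ <;> linarith

lemma abs_sub_of_pos_iff_neg {a b : ℝ} (ha : a ≠ 0) (h : 0 < b ↔ a < 0) :
    |b - a| = |b| + |a| ∧ (0 < b - a ↔ a < 0) := by
  rcases ha.lt_or_gt with ha | ha
  · have hb := h.2 ha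
    rw [abs_of_pos hb, abs_of_neg ha, abs_of_pos (by linarith)]
    exact ⟨by ring, iff_of_true (by linarith) ha⟩
  · have hb := not_lt.1 (mt h.1 ha.not_gt)
    rw [abs_of_nonpos hb, abs_of_pos ha, abs_of_neg (by linarith)]
    exact ⟨by ring, iff_of_false (by linarith) ha.not_gt⟩

lemma pos_iff_and_abs_add_mul {a δ x : ℝ} (hδ : 0 < δ ↔ a < 0) (hx : 0 ≤ x)
    (hδx : |δ| * x < |a|) : (0 < a + δ * x ↔ 0 < a) ∧ |a + δ * x| = |a| - |δ| * x := by
  rcases lt_or_ge a 0 with ha | ha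
  · have hδ' := hδ.2 ha
    rw [abs_of_pos hδ', abs_of_neg ha] at hδx ⊢
    rw [abs_of_neg (by linarith)]
    exact ⟨iff_of_false (by linarith) ha.not_gt, by ring⟩
  · have hδ' := not_lt.1 (mt hδ.1 ha.not_gt)
    rw [abs_of_nonpos hδ', abs_of_nonneg ha] at hδx ⊢
    have hpos : 0 < a + δ * x := by linarith
    rw [abs_of_pos hpos]
    exact ⟨iff_of_true hpos (by linarith [mul_nonpos_of_nonpos_of_nonneg hδ' hx]), by ring⟩

/-- Used with four consecutive `|c_{S(k)}|` as `a₁, …, a₄` and two consecutive `lam ^ S(k)` as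
`X, Y`. -/
lemma add_mul_lt_of_recurrence {X Y a₁ a₂ a₃ a₄ : ℝ} (hY : 1 < Y)
    (hXY : 2 ≤ X * (Y - 1)) (h₃ : 0 ≤ a₃) (h₄₃ : a₄ < a₃) (h₁ : a₃ + a₁ = Y * a₂)
    (h₂ : a₄ + a₂ = Y * X * a₃) :
    a₂ + Y * a₃ < a₁ := by
  have h₂₃ : (Y * X - 1) * a₃ < a₂ := by linarith
  nlinarith [mul_lt_mul_of_pos_left h₂₃ (sub_pos.2 hY),
    mul_nonneg (mul_nonneg h₃ (by linarith : 0 ≤ Y)) (sub_nonneg.2 hXY)]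

lemma eq_fib_add_two_of_rec {S : ℤ → ℕ} (h₂ : S (-2) = 0) (h₁ : S (-1) = 1)
    (hrec : ∀ k : ℤ, 0 ≤ k → S k = S (k - 1) + S (k - 2)) {k : ℤ} {n : ℕ} (hk : k = n) :
    S k = fib (n + 2) := by
  have key : ∀ n : ℕ, S ((n : ℤ) - 2) = fib n ∧ S ((n : ℤ) - 1) = fib (n + 1) := by
    intro n
    induction n with
    | zero => simpa using ⟨h₂, h₁⟩
    | succ n ih =>
      rw [show ((n + 1 : ℕ) : ℤ) - 2 = n - 1 by push_cast; ring,
        show ((n + 1 : ℕ) : ℤ) - 1 = n by push_cast; ring, hrec n n.cast_nonneg, ih.1, ih.2,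
        Nat.fib_add_two, add_comm (fib n)]
      exact ⟨rfl, rfl⟩
  subst hk
  simpa using (key (n + 2)).1

def tent (lam x : ℝ) : ℝ := lam * (1 - |x|) - 1

/-- The slope of `tent lam` at `x`, with the turning point counted on the left branch. -/
noncomputable def tentSlope (lam x : ℝ) : ℝ := if 0 < x then -lam else lam

lemma tent_sub_tent {lam x y : ℝ} (h : 0 < x ↔ 0 < y) :
    tent lam x - tent lam y = tentSlope lam y * (x - y) := by
  unfold tent tentSlope
  by_cases hy : 0 < y
  · rw [if_pos hy, abs_of_pos hy, abs_of_pos (h.2 hy)]; ring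
  · rw [if_neg hy, abs_of_nonpos (not_lt.1 hy), abs_of_nonpos (not_lt.1 (mt h.1 hy))]; ring

lemma tent_sub_tent_zero (lam x : ℝ) : tent lam x - tent lam 0 = -(lam * |x|) := by
  simp only [tent, abs_zero]; ring

lemma abs_tentSlope {lam : ℝ} (hlam : 0 ≤ lam) (x : ℝ) : |tentSlope lam x| = lam := by
  unfold tentSlope
  split_ifs <;> simp [abs_of_nonneg hlam]

/-- `-lam` times the derivative of the `(j - 1)`-st iterate of `tent lam` at `c 1`, along the
itinerary of `c`. -/
noncomputable def orbitDeriv (lam : ℝ) (c : ℕ → ℝ) (j : ℕ) : ℝ :=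
  -lam * ∏ i ∈ Finset.Ico 1 j, tentSlope lam (c i)

theorem sub_eq_orbitDeriv_mul {lam : ℝ} {c : ℕ → ℝ} (hc0 : c 0 = 0)
    (hc : ∀ i, c (i + 1) = tent lam (c i)) {n j : ℕ} (hj : 1 ≤ j)
    (hsame : ∀ i, 1 ≤ i → i < j → (0 < c (n + i) ↔ 0 < c i)) :
    c (n + j) - c j = orbitDeriv lam c j * |c n| := by
  induction j, hj using Nat.le_induction with
  | base => rw [hc, hc 0, hc0, tent_sub_tent_zero]; simp [orbitDeriv]
  | succ j hj ih =>
    rw [← add_assoc, hc, hc, tent_sub_tent (hsame j hj (by omega)),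
      ih fun i hi hij => hsame i hi (by omega), orbitDeriv, orbitDeriv,
      Finset.prod_Ico_succ_top hj]
    ring

lemma abs_orbitDeriv {lam : ℝ} (hlam : 0 ≤ lam) (c : ℕ → ℝ) {j : ℕ} (hj : 1 ≤ j) :
    |orbitDeriv lam c j| = lam ^ j := by
  rw [orbitDeriv, abs_mul, abs_neg, abs_of_nonneg hlam, Finset.abs_prod]
  simp only [abs_tentSlope hlam, Finset.prod_const, Nat.card_Ico]
  rw [← pow_succ', Nat.sub_add_cancel hj]

/-- The paper's `D_k`; `intervalI c k` and `intervalJ c k` are its `I_k` and `J_k`. -/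
noncomputable def intervalD (c : ℕ → ℝ) (k : ℕ) : Set ℝ := uIcc 0 (c (fib (k + 2)))

noncomputable def intervalI (c : ℕ → ℝ) (k : ℕ) : Set ℝ :=
  if Even k then uIcc (c (fib (k + 2))) (c (fib (k + 3)))
  else uIcc (c (fib (k + 2))) (c (fib (k + 4)))

noncomputable def intervalJ (c : ℕ → ℝ) (k : ℕ) : Set ℝ :=
  uIcc (c (fib (k + 1))) (c (fib (k + 3) + fib (k + 1)))

lemma intervalI_of_even {c : ℕ → ℝ} {k : ℕ} (hk : Even k) :
    intervalI c k = uIcc (c (fib (k + 2))) (c (fib (k + 3))) :=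
  if_pos hk

lemma intervalI_of_odd {c : ℕ → ℝ} {k : ℕ} (hk : Odd k) :
    intervalI c k = uIcc (c (fib (k + 2))) (c (fib (k + 4))) :=
  if_neg (Nat.not_even_iff_odd.2 hk)

/-- Fibonacci recurrence of the turning point for the orbit `c` of `0` under `tent lam`; the
paper's `S(k)` is `fib (k + 2)`. -/
structure FibonacciRecurrence (lam : ℝ) (c : ℕ → ℝ) : Prop where
  one_lt : 1 < lam
  zero : c 0 = 0
  succ (i : ℕ) : c (i + 1) = tent lam (c i)
  ne_zero {j : ℕ} : 1 ≤ j → c j ≠ 0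
  same_side (n j : ℕ) : 1 ≤ j → j < fib (n + 2) → (0 < c (fib (n + 3) + j) ↔ 0 < c j)
  opposite_side (n : ℕ) : 0 < c (fib (n + 4)) ↔ c (fib (n + 2)) < 0
  abs_lt (n : ℕ) : |c (fib (n + 3))| < |c (fib (n + 2))|

namespace FibonacciRecurrence

variable {lam : ℝ} {c : ℕ → ℝ}

lemma c_one (h : FibonacciRecurrence lam c) : c 1 = lam - 1 := by
  rw [h.succ, h.zero, tent, abs_zero]; ring

lemma c_two (h : FibonacciRecurrence lam c) : c 2 = -(lam - 1) ^ 2 := by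
  rw [h.succ, h.c_one, tent, abs_of_pos (by linarith [h.one_lt])]; ring

lemma fib_ne_zero (h : FibonacciRecurrence lam c) (n : ℕ) : c (fib (n + 2)) ≠ 0 :=
  h.ne_zero (Nat.fib_pos.2 (by omega))

lemma neg_iff_not_pos (h : FibonacciRecurrence lam c) (n : ℕ) :
    c (fib (n + 2)) < 0 ↔ ¬ 0 < c (fib (n + 2)) :=
  ⟨lt_asymm, fun hpos => (not_lt.1 hpos).lt_of_ne (h.fib_ne_zero n)⟩

lemma pos_add_two_iff (h : FibonacciRecurrence lam c) (n : ℕ) :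
    0 < c (fib (n + 4)) ↔ ¬ 0 < c (fib (n + 2)) :=
  (h.opposite_side n).trans (h.neg_iff_not_pos n)

lemma same_side_succ_iff_odd (h : FibonacciRecurrence lam c) (n : ℕ) :
    (0 < c (fib (n + 3)) ↔ 0 < c (fib (n + 2))) ↔ Odd n := by
  induction n with
  | zero =>
    have h1 : 0 < c 1 := by rw [h.c_one]; linarith [h.one_lt]
    have h2 : c 2 < 0 := by
      rw [h.c_two]; exact neg_neg_of_pos (pow_pos (by linarith [h.one_lt]) 2)
    rw [show fib (0 + 3) = 2 from rfl, show fib (0 + 2) = 1 from rfl]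
    simpa using fun hiff => h2.not_gt (hiff.2 h1)
  | succ n ih =>
    rw [Nat.odd_add_one, ← ih, h.pos_add_two_iff]
    tauto

lemma pos_succ_iff_neg_of_even (h : FibonacciRecurrence lam c) {n : ℕ} (hn : Even n) :
    0 < c (fib (n + 3)) ↔ c (fib (n + 2)) < 0 := by
  have hsucc := (h.same_side_succ_iff_odd n).not.2 (Nat.not_odd_iff_even.2 hn)
  have hneg := h.neg_iff_not_pos n
  tauto

lemma pos_add_three_iff_of_even (h : FibonacciRecurrence lam c) {n : ℕ} (hn : Even n) :
    0 < c (fib (n + 5)) ↔ 0 < c (fib (n + 2)) := by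
  have hsucc := h.pos_succ_iff_neg_of_even hn
  have hneg := h.neg_iff_not_pos n
  have hadd : 0 < c (fib (n + 5)) ↔ ¬ 0 < c (fib (n + 3)) := h.pos_add_two_iff (n + 1)
  tauto

lemma abs_antitone (h : FibonacciRecurrence lam c) : Antitone fun n => |c (fib (n + 2))| :=
  antitone_nat_of_succ_le fun n => (h.abs_lt n).le

lemma sub_eq_orbitDeriv_mul_abs_succ (h : FibonacciRecurrence lam c) (n : ℕ) :
    c (fib (n + 4)) - c (fib (n + 2)) = orbitDeriv lam c (fib (n + 2)) * |c (fib (n + 3))| := by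
  rw [Nat.fib_add_two (n := n + 2), add_comm]
  exact sub_eq_orbitDeriv_mul h.zero h.succ (Nat.fib_pos.2 (by omega)) (h.same_side n)

lemma sub_eq_orbitDeriv_mul_abs_add_two (h : FibonacciRecurrence lam c) (n : ℕ) :
    c (fib (n + 4) + fib (n + 2)) - c (fib (n + 2)) =
      orbitDeriv lam c (fib (n + 2)) * |c (fib (n + 4))| :=
  sub_eq_orbitDeriv_mul h.zero h.succ (Nat.fib_pos.2 (by omega)) fun i hi hij =>
    h.same_side (n + 1) i hi (hij.trans_le (Nat.fib_mono (by omega)))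

lemma recurrence (h : FibonacciRecurrence lam c) (n : ℕ) :
    |c (fib (n + 4))| + |c (fib (n + 2))| = lam ^ fib (n + 2) * |c (fib (n + 3))| := by
  rw [← (abs_sub_of_pos_iff_neg (h.fib_ne_zero n) (h.opposite_side n)).1,
    h.sub_eq_orbitDeriv_mul_abs_succ, abs_mul, abs_abs,
    abs_orbitDeriv (by linarith [h.one_lt]) c (Nat.fib_pos.2 (by omega))]

lemma orbitDeriv_pos_iff (h : FibonacciRecurrence lam c) (n : ℕ) :
    0 < orbitDeriv lam c (fib (n + 2)) ↔ c (fib (n + 2)) < 0 := by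
  rw [← (abs_sub_of_pos_iff_neg (h.fib_ne_zero n) (h.opposite_side n)).2,
    h.sub_eq_orbitDeriv_mul_abs_succ, mul_pos_iff_of_pos_right (abs_pos.2 (h.fib_ne_zero _))]

lemma lam_add_one_lt_sq (h : FibonacciRecurrence lam c) : lam + 1 < lam ^ 2 := by
  have hrec : |c 3| + |c 1| = lam ^ 1 * |c 2| := h.recurrence 0
  have hc3 : 0 < |c 3| := abs_pos.2 (h.ne_zero (by norm_num))
  have hlam := h.one_lt
  rw [h.c_one, h.c_two, abs_neg, abs_of_pos (sub_pos.2 hlam),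
    abs_of_nonneg (sq_nonneg (lam - 1))] at hrec
  nlinarith

lemma abs_succ_add_pow_mul_lt (h : FibonacciRecurrence lam c) {n : ℕ} (hn : 1 ≤ n) :
    |c (fib (n + 3))| + lam ^ fib (n + 2) * |c (fib (n + 4))| < |c (fib (n + 2))| := by
  have hlam := h.one_lt
  have hX : lam ≤ lam ^ fib (n + 1) :=
    le_self_pow₀ hlam.le (Nat.fib_pos.2 (by omega)).ne'
  have hY : lam ^ 2 ≤ lam ^ fib (n + 2) :=
    pow_le_pow_right₀ hlam.le ((Nat.fib_mono (show 3 ≤ n + 2 by omega)).trans' le_rfl)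
  have hXY : 2 ≤ lam ^ fib (n + 1) * (lam ^ fib (n + 2) - 1) := by
    nlinarith [h.lam_add_one_lt_sq,
      mul_le_mul hX (sub_le_sub_right hY 1) (by nlinarith) (by linarith)]
  have hrec : |c (fib (n + 5))| + |c (fib (n + 3))| =
      lam ^ fib (n + 2) * lam ^ fib (n + 1) * |c (fib (n + 4))| := by
    have hfib : fib (n + 3) = fib (n + 2) + fib (n + 1) := by rw [Nat.fib_add_two, add_comm]
    rw [← pow_add, ← hfib]
    exact h.recurrence (n + 1)
  exact add_mul_lt_of_recurrence (by nlinarith) hXY (abs_nonneg _) (h.abs_lt (n + 2))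
    (h.recurrence n) hrec

lemma abs_add_three_add_pow_mul_lt (h : FibonacciRecurrence lam c) (n : ℕ) :
    |c (fib (n + 5))| + lam ^ fib (n + 2) * |c (fib (n + 4))| < |c (fib (n + 2))| := by
  cases n with
  | succ n =>
    linarith [h.abs_succ_add_pow_mul_lt (n := n + 1) (by omega),
      h.abs_antitone (show n + 2 ≤ n + 4 by omega)]
  | zero =>
    show |c 5| + lam ^ 1 * |c 3| < |c 1|
    have hlam := h.one_lt
    have h₀ : |c 1| = lam - 1 := by rw [h.c_one, abs_of_pos (sub_pos.2 hlam)]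
    have h₁ : |c 2| = (lam - 1) * |c 1| := by
      rw [h.c_two, h₀, abs_neg, abs_of_nonneg (sq_nonneg _)]; ring
    have hrec₀ : |c 3| + |c 1| = lam ^ 1 * |c 2| := h.recurrence 0
    have hrec₁ : |c 5| + |c 2| = lam ^ 2 * |c 3| := h.recurrence 1
    have h₃₂ : |c 5| < |c 3| := h.abs_lt 2
    -- if `(lam + 1) |c 3| ≥ |c 1|`, then `hrec₁` would force `|c 5| ≥ |c 3|`
    have key : (lam + 1) * |c 3| < |c 1| := by
      by_contra! hle
      nlinarith [mul_le_mul_of_nonneg_left hle (sub_pos.2 hlam).le]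
    nlinarith

lemma J_endpoint_pos_iff_and_abs (h : FibonacciRecurrence lam c) (n : ℕ) :
    (0 < c (fib (n + 4) + fib (n + 2)) ↔ 0 < c (fib (n + 2))) ∧
      |c (fib (n + 4) + fib (n + 2))| =
        |c (fib (n + 2))| - lam ^ fib (n + 2) * |c (fib (n + 4))| := by
  have hδ := abs_orbitDeriv (by linarith [h.one_lt]) c (Nat.fib_pos.2 (show 0 < n + 2 by omega))
  rw [← sub_add_cancel (c (fib (n + 4) + fib (n + 2))) (c (fib (n + 2))),
    h.sub_eq_orbitDeriv_mul_abs_add_two, add_comm, ← hδ]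
  refine pos_iff_and_abs_add_mul (h.orbitDeriv_pos_iff n) (abs_nonneg _) ?_
  rw [hδ]
  linarith [h.abs_add_three_add_pow_mul_lt n, abs_nonneg (c (fib (n + 5)))]

lemma abs_J_endpoint_le (h : FibonacciRecurrence lam c) (n : ℕ) :
    |c (fib (n + 4) + fib (n + 2))| ≤ |c (fib (n + 2))| := by
  rw [(h.J_endpoint_pos_iff_and_abs n).2]
  have := h.one_lt
  linarith [mul_nonneg (pow_nonneg (by linarith : (0 : ℝ) ≤ lam) (fib (n + 2)))
    (abs_nonneg (c (fib (n + 4))))]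

lemma abs_add_three_lt_abs_J_endpoint (h : FibonacciRecurrence lam c) (n : ℕ) :
    |c (fib (n + 5))| < |c (fib (n + 4) + fib (n + 2))| := by
  linarith [(h.J_endpoint_pos_iff_and_abs n).2, h.abs_add_three_add_pow_mul_lt n]

lemma intervalD_subset_intervalI (h : FibonacciRecurrence lam c) (n : ℕ) :
    intervalD c n ⊆ intervalI c n := by
  rcases Nat.even_or_odd n with hn | hn
  · rw [intervalI_of_even hn]
    exact uIcc_subset_uIcc (zero_mem_uIcc_of_pos_iff_neg (h.pos_succ_iff_neg_of_even hn))
      left_mem_uIcc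
  · rw [intervalI_of_odd hn]
    exact uIcc_subset_uIcc (zero_mem_uIcc_of_pos_iff_neg (h.opposite_side n)) left_mem_uIcc

lemma mem_intervalI (h : FibonacciRecurrence lam c) {n : ℕ} {x : ℝ}
    (hx : 0 < x ↔ 0 < c (fib (n + 2))) (hxa : |x| ≤ |c (fib (n + 2))|) : x ∈ intervalI c n :=
  h.intervalD_subset_intervalI n (mem_uIcc_zero_of_abs_le hx hxa)

lemma intervalI_antitone (h : FibonacciRecurrence lam c) : Antitone (intervalI c) := by
  refine antitone_nat_of_succ_le fun n => ?_
  rcases Nat.even_or_odd n with hn | hn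
  · have hmem := h.mem_intervalI (h.pos_add_three_iff_of_even hn)
      (h.abs_antitone (show n ≤ n + 3 by omega))
    rw [intervalI_of_even hn] at hmem ⊢
    rw [intervalI_of_odd hn.add_one]
    exact uIcc_subset_uIcc right_mem_uIcc hmem
  · have hmem := h.mem_intervalI ((h.same_side_succ_iff_odd n).2 hn) (h.abs_lt n).le
    rw [intervalI_of_odd hn] at hmem ⊢
    rw [intervalI_of_even hn.add_one]
    exact uIcc_subset_uIcc hmem right_mem_uIcc

lemma intervalJ_subset_intervalD (h : FibonacciRecurrence lam c) (n : ℕ) :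
    intervalJ c (n + 1) ⊆ intervalD c n :=
  uIcc_subset_uIcc right_mem_uIcc
    (mem_uIcc_zero_of_abs_le (h.J_endpoint_pos_iff_and_abs n).1 (h.abs_J_endpoint_le n))

lemma zero_notMem_intervalJ (h : FibonacciRecurrence lam c) (n : ℕ) :
    (0 : ℝ) ∉ intervalJ c (n + 1) :=
  zero_notMem_uIcc_of_pos_iff (h.fib_ne_zero n)
    (abs_pos.1 ((abs_nonneg _).trans_lt (h.abs_add_three_lt_abs_J_endpoint n)))
    (h.J_endpoint_pos_iff_and_abs n).1

lemma disjoint_intervalJ_intervalI (h : FibonacciRecurrence lam c) (n : ℕ) :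
    Disjoint (intervalJ c (n + 1)) (intervalI c (n + 1)) := by
  obtain ⟨hw, hw_abs⟩ := h.J_endpoint_pos_iff_and_abs n
  rcases Nat.even_or_odd n with hn | hn
  · rw [intervalI_of_odd hn.add_one, uIcc_comm]
    exact disjoint_uIcc_of_abs_lt (h.fib_ne_zero n) hw (h.abs_J_endpoint_le n)
      (h.pos_add_three_iff_of_even hn) (h.abs_add_three_lt_abs_J_endpoint n)
      (h.pos_succ_iff_neg_of_even hn)
  · rw [intervalI_of_even hn.add_one]
    refine disjoint_uIcc_of_abs_lt (h.fib_ne_zero n) hw (h.abs_J_endpoint_le n)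
      ((h.same_side_succ_iff_odd n).2 hn) ?_ (h.opposite_side n)
    linarith [h.abs_succ_add_pow_mul_lt hn.pos]

lemma of_int_indexed {T : ℝ → ℝ} {S : ℤ → ℕ} (hlam : 1 < lam)
    (hT : ∀ x, T x = lam * (1 - |x|) - 1) (hc : ∀ i, c i = T^[i] 0)
    (hS : ∀ (k : ℤ) (n : ℕ), k = n → S k = fib (n + 2)) (hne : ∀ j, 1 ≤ j → c j ≠ 0)
    (hsame : ∀ k : ℤ, 2 ≤ k → ∀ j : ℕ, 1 ≤ j → j < S (k - 2) →
      (0 < c (S (k - 1) + j) ↔ 0 < c j))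
    (hopp : ∀ k : ℤ, 2 ≤ k → (0 < c (S k) ↔ c (S (k - 2)) < 0))
    (hdec : ∀ k : ℤ, 0 ≤ k → |c (S (k + 1))| < |c (S k)|) :
    FibonacciRecurrence lam c where
  one_lt := hlam
  zero := hc 0
  succ i := by rw [hc, hc, Function.iterate_succ_apply', hT, tent]
  ne_zero := hne _
  same_side n j hj hjn := by
    have := hsame (n + 2) (by omega) j hj (by rwa [hS (n + 2 - 2) n (by ring)])
    rwa [hS (n + 2 - 1) (n + 1) (by push_cast; ring)] at this
  opposite_side n := by
    have := hopp (n + 2) (by omega)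
    rwa [hS (n + 2) (n + 2) (by push_cast; ring), hS (n + 2 - 2) n (by ring)] at this
  abs_lt n := by
    have := hdec n n.cast_nonneg
    rwa [hS (n + 1) (n + 1) (by push_cast; ring), hS n n rfl] at this

end FibonacciRecurrence

theorem J_intervals_nested_and_disjoint_general
    (lam : ℝ) (hlam1 : 1 < lam)
    (T : ℝ → ℝ) (hT : ∀ x : ℝ, T x = lam * (1 - |x|) - 1)
    (c : ℕ → ℝ) (hc : ∀ i : ℕ, c i = T^[i] 0)
    (S : ℤ → ℕ) (hSm2 : S (-2) = 0) (hSm1 : S (-1) = 1)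
    (hSrec : ∀ k : ℤ, 0 ≤ k → S k = S (k - 1) + S (k - 2))
    (hcne : ∀ j : ℕ, 1 ≤ j → c j ≠ 0)
    (hsame : ∀ k : ℤ, 2 ≤ k → ∀ j : ℕ, 1 ≤ j → j < S (k - 2) →
      (0 < c (S (k - 1) + j) ↔ 0 < c j))
    (hopp : ∀ k : ℤ, 2 ≤ k → (0 < c (S k) ↔ c (S (k - 2)) < 0))
    (hdec : ∀ k : ℤ, 0 ≤ k → |c (S (k + 1))| < |c (S k)|)
    (I : ℤ → Set ℝ)
    (hIdef : ∀ k : ℤ, 0 ≤ k →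
      (Even k → I k = Set.uIcc (c (S k)) (c (S (k + 1)))) ∧
      (¬ Even k → I k = Set.uIcc (c (S k)) (c (S (k + 2)))))
    (J : ℤ → Set ℝ)
    (hJdef : ∀ k : ℤ, 1 ≤ k → J k = Set.uIcc (c (S (k - 1))) (c (S (k + 1) + S (k - 1))))
    (D : ℤ → Set ℝ) (hDdef : ∀ k : ℤ, D k = Set.uIcc 0 (c (S k))) :
    (∀ k : ℤ, 0 ≤ k → J (k + 1) ⊆ D k ∧ (0 : ℝ) ∉ J (k + 1) ∧ J (k + 1) ∩ I (k + 1) = ∅) ∧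
    (∀ k k' : ℤ, 0 < k → k < k' → J k' ⊆ D (k' - 1) ∧ D (k' - 1) ⊆ I k ∧ J k ∩ J k' = ∅) := by
  have hS (k : ℤ) (n : ℕ) (hk : k = n) : S k = fib (n + 2) :=
    eq_fib_add_two_of_rec hSm2 hSm1 hSrec hk
  have h := FibonacciRecurrence.of_int_indexed hlam1 hT hc hS hcne hsame hopp hdec
  have hI (n : ℕ) : I n = intervalI c n := by
    rcases Nat.even_or_odd n with hn | hn
    · rw [(hIdef n n.cast_nonneg).1 (by exact_mod_cast hn), intervalI_of_even hn, hS n n rfl,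
        hS (n + 1) (n + 1) (by push_cast; ring)]
    · rw [(hIdef n n.cast_nonneg).2 (by exact_mod_cast Nat.not_even_iff_odd.2 hn),
        intervalI_of_odd hn, hS n n rfl, hS (n + 2) (n + 2) (by push_cast; ring)]
  have hJ (n : ℕ) : J (n + 1) = intervalJ c (n + 1) := by
    rw [hJdef _ (by omega), hS (n + 1 - 1) n (by ring), hS (n + 1 + 1) (n + 2) (by push_cast; ring)]
    rfl
  have hD (n : ℕ) : D n = intervalD c n := by rw [hDdef, hS n n rfl, intervalD]
  refine ⟨fun k hk => ?_, fun k k' hk hkk' => ?_⟩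
  · lift k to ℕ using hk
    rw [hJ, hD, ← Nat.cast_succ, hI, ← disjoint_iff_inter_eq_empty]
    exact ⟨h.intervalJ_subset_intervalD k, h.zero_notMem_intervalJ k,
      h.disjoint_intervalJ_intervalI k⟩
  · obtain ⟨j, rfl⟩ : ∃ j : ℕ, k = j + 1 := ⟨(k - 1).toNat, by omega⟩
    obtain ⟨m, rfl⟩ : ∃ m : ℕ, k' = m + 1 := ⟨(k' - 1).toNat, by omega⟩
    have hjm : j + 1 ≤ m := by omega
    have hDI : intervalD c m ⊆ intervalI c (j + 1) :=
      (h.intervalD_subset_intervalI m).trans (h.intervalI_antitone hjm)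
    rw [add_sub_cancel_right, hJ, hJ, hD, ← Nat.cast_succ, hI, ← disjoint_iff_inter_eq_empty]
    exact ⟨h.intervalJ_subset_intervalD m, hDI,
      (h.disjoint_intervalJ_intervalI j).mono_right ((h.intervalJ_subset_intervalD m).trans hDI)⟩

theorem J_intervals_nested_and_disjoint
    (lam : ℝ) (hlam1 : 1 < lam) (hlam2 : lam ≤ 2)
    (T : ℝ → ℝ) (hT : ∀ x : ℝ, T x = lam * (1 - |x|) - 1)
    (c : ℕ → ℝ) (hc : ∀ i : ℕ, c i = T^[i] 0)
    (S : ℤ → ℕ) (hSm2 : S (-2) = 0) (hSm1 : S (-1) = 1)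
    (hSrec : ∀ k : ℤ, 0 ≤ k → S k = S (k - 1) + S (k - 2))
    (hcne : ∀ j : ℕ, 1 ≤ j → c j ≠ 0)
    (hc2neg : c 2 < 0) (hc1pos : 0 < c 1)
    (hsame : ∀ k : ℤ, 2 ≤ k → ∀ j : ℕ, 1 ≤ j → j < S (k - 2) →
      (0 < c (S (k - 1) + j) ↔ 0 < c j))
    (hopp : ∀ k : ℤ, 2 ≤ k → (0 < c (S k) ↔ c (S (k - 2)) < 0))
    (hdec : ∀ k : ℤ, 0 ≤ k → |c (S (k + 1))| < |c (S k)|)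
    (hc34 : |c 3| < |c 4|)
    (I : ℤ → Set ℝ)
    (hIdef : ∀ k : ℤ, 0 ≤ k →
      (Even k → I k = Set.uIcc (c (S k)) (c (S (k + 1)))) ∧
      (¬ Even k → I k = Set.uIcc (c (S k)) (c (S (k + 2)))))
    (J : ℤ → Set ℝ)
    (hJdef : ∀ k : ℤ, 1 ≤ k → J k = Set.uIcc (c (S (k - 1))) (c (S (k + 1) + S (k - 1))))
    (D : ℤ → Set ℝ) (hDdef : ∀ k : ℤ, D k = Set.uIcc 0 (c (S k))) :
    (∀ k : ℤ, 0 ≤ k → J (k + 1) ⊆ D k ∧ (0 : ℝ) ∉ J (k + 1) ∧ J (k + 1) ∩ I (k + 1) = ∅) ∧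
    (∀ k k' : ℤ, 0 < k → k < k' → J k' ⊆ D (k' - 1) ∧ D (k' - 1) ⊆ I k ∧ J k ∩ J k' = ∅) :=
  J_intervals_nested_and_disjoint_general lam hlam1 T hT c hc S hSm2 hSm1 hSrec hcne hsame hopp hdec
    I hIdef J hJdef D hDdef
end

section
/- The limit lim_{k→∞} λ^{S(k+1)} |D_k| exists and is strictly positive; that is, there is a real number β > 0 such that λ^{S(k+1)} |D_k| → β as k → ∞. -/
open MeasureTheory Filter Set

noncomputable def intervalLength (A : Set ℝ) : ℝ := (MeasureTheory.volume A).toReal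

lemma tent_aux (lam : ℝ) (hlam : 1 < lam) (s : ℕ → ℕ) (a : ℕ → ℝ)
    (hapos : ∀ n, 0 < a n) (hadec : ∀ n, a (n+1) < a n)
    (hsrec : ∀ n, s (n+2) = s (n+1) + s n)
    (hsge : ∀ n, n ≤ s n)
    (hrec : ∀ n, a (n+2) + a n = lam ^ (s n) * a (n+1)) :
    ∃ β : ℝ, 0 < β ∧
      Tendsto (fun n => lam ^ (s (n+1)) * a n) atTop (nhds β) := by
  have hlam0 : (0:ℝ) < lam := lt_trans one_pos hlam
  set u : ℕ → ℝ := fun n => lam ^ (s (n+1)) * a n with hu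
  set d : ℕ → ℝ := fun n => u (n+1) - u n with hd
  have hδ : ∀ n, d n = lam ^ (s (n+1)) * a (n+2) := by
    intro n
    have h1 : lam ^ s (n+2) = lam ^ s (n+1) * lam ^ s n := by rw [hsrec, pow_add]
    have h2 := hrec n
    simp only [hd, hu]
    rw [h1]
    linear_combination (-(lam ^ s (n+1))) * h2
  have hδpos : ∀ n, 0 < d n := by
    intro n
    rw [hδ]
    exact mul_pos (pow_pos hlam0 _) (hapos _)
  have hkey : ∀ n, (lam ^ s (n+2) - 1) * a (n+3) < a (n+2) := by
    intro n
    have h2 := hrec (n+2)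
    have h3 := hadec (n+3)
    nlinarith [h2, h3]
  obtain ⟨N, hN⟩ := pow_unbounded_of_one_lt (4:ℝ) hlam
  have hratio : ∀ᶠ n in atTop, ‖d (n+1)‖ ≤ (1/2) * ‖d n‖ := by
    rw [eventually_atTop]
    refine ⟨N, fun n hn => ?_⟩
    have hge : ∀ m : ℕ, n ≤ m → (4:ℝ) ≤ lam ^ s m := by
      intro m hm
      have : N ≤ s m := le_trans (le_trans hn hm) (hsge m)
      calc (4:ℝ) ≤ lam ^ N := hN.le
        _ ≤ lam ^ s m := pow_le_pow_right₀ hlam.le this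
    have h1 : (4:ℝ) ≤ lam ^ s (n+1) := hge (n+1) (by omega)
    have h2 : (4:ℝ) ≤ lam ^ s (n+2) := hge (n+2) (by omega)
    rw [Real.norm_eq_abs, Real.norm_eq_abs, abs_of_pos (hδpos _), abs_of_pos (hδpos _),
      hδ, hδ]
    have hk := hkey n
    have ha2 := hapos (n+2)
    have ha3 := hapos (n+3)
    nlinarith [mul_pos ha3 (lt_of_lt_of_le (by norm_num : (0:ℝ) < 4) h1)]
  have hsum : Summable d := summable_of_ratio_norm_eventually_le (by norm_num) hratio
  refine ⟨u 0 + ∑' n, d n, ?_, ?_⟩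
  · have h0 : 0 < u 0 := mul_pos (pow_pos hlam0 _) (hapos 0)
    have h1 : 0 ≤ ∑' n, d n := tsum_nonneg (fun n => (hδpos n).le)
    linarith
  · have htel : ∀ n, u n = u 0 + ∑ i ∈ Finset.range n, d i := by
      intro n
      simp only [hd]
      rw [Finset.sum_range_sub]
      ring
    have h2 : Tendsto (fun n => ∑ i ∈ Finset.range n, d i) atTop (nhds (∑' n, d n)) :=
      hsum.hasSum.tendsto_sum_nat
    exact (h2.const_add (u 0)).congr (fun n => (htel n).symm)

theorem diameter_asymptotics
    (lam : ℝ) (hlam1 : 1 < lam) (hlam2 : lam ≤ 2)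
    (T : ℝ → ℝ) (hT : ∀ x : ℝ, T x = lam * (1 - |x|) - 1)
    (c : ℕ → ℝ) (hc : ∀ i : ℕ, c i = T^[i] 0)
    (S : ℤ → ℕ) (hSm2 : S (-2) = 0) (hSm1 : S (-1) = 1)
    (hSrec : ∀ k : ℤ, 0 ≤ k → S k = S (k - 1) + S (k - 2))
    (hcne : ∀ j : ℕ, 1 ≤ j → c j ≠ 0)
    (hc2neg : c 2 < 0) (hc1pos : 0 < c 1)
    (hsame : ∀ k : ℤ, 2 ≤ k → ∀ j : ℕ, 1 ≤ j → j < S (k - 2) →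
      (0 < c (S (k - 1) + j) ↔ 0 < c j))
    (hopp : ∀ k : ℤ, 2 ≤ k → (0 < c (S k) ↔ c (S (k - 2)) < 0))
    (hdec : ∀ k : ℤ, 0 ≤ k → |c (S (k + 1))| < |c (S k)|)
    (hc34 : |c 3| < |c 4|)
    (D : ℤ → Set ℝ) (hDdef : ∀ k : ℤ, D k = Set.uIcc 0 (c (S k))) :
    ∃ β : ℝ, 0 < β ∧
      Filter.Tendsto (fun k : ℕ => lam ^ S ((k : ℤ) + 1) * intervalLength (D (k : ℤ)))
        Filter.atTop (nhds β) := by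
  have hlam0 : (0:ℝ) < lam := lt_trans one_pos hlam1
  -- natural-index Fibonacci
  have hS0 : S ((0:ℕ):ℤ) = 1 := by
    have h := hSrec 0 le_rfl
    norm_num at h ⊢
    rw [h, hSm1, hSm2]
  have hsrecN : ∀ n : ℕ, S (((n+2:ℕ)):ℤ) = S (((n+1:ℕ)):ℤ) + S ((n:ℕ):ℤ) := by
    intro n
    have h := hSrec ((n:ℤ)+2) (by positivity)
    have e1 : (n:ℤ)+2-1 = ((n+1:ℕ):ℤ) := by push_cast; ring
    have e2 : (n:ℤ)+2-2 = ((n:ℕ):ℤ) := by push_cast; ring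
    rw [e1, e2] at h
    have e3 : ((n+2:ℕ):ℤ) = (n:ℤ)+2 := by push_cast; ring
    rw [e3]
    exact h
  have hS1 : S ((1:ℕ):ℤ) = 2 := by
    have h := hSrec 1 (by norm_num)
    norm_num at h ⊢
    have h0 : S (0:ℤ) = 1 := by simpa using hS0
    rw [h, h0, hSm1]
  have hsge1 : ∀ n : ℕ, n + 1 ≤ S ((n:ℕ):ℤ) := by
    have key : ∀ n : ℕ, n + 1 ≤ S ((n:ℕ):ℤ) ∧ n + 2 ≤ S (((n+1:ℕ)):ℤ) := by
      intro n
      induction n with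
      | zero => exact ⟨by rw [hS0], by rw [hS1]⟩
      | succ m ih =>
        refine ⟨ih.2, ?_⟩
        rw [hsrecN m]
        omega
    exact fun n => (key n).1
  -- dynamics
  have hiter : ∀ i : ℕ, c (i+1) = T (c i) := by
    intro i
    rw [hc, hc, Function.iterate_succ_apply']
  have hc0 : c 0 = 0 := by rw [hc]; simp
  have Tstep : ∀ x y : ℝ, ((0 ≤ x ∧ 0 ≤ y) ∨ (x ≤ 0 ∧ y ≤ 0)) →
      |T x - T y| = lam * |x - y| := by
    intro x y h
    rw [hT, hT]
    have e : lam * (1 - |x|) - 1 - (lam * (1 - |y|) - 1) = lam * (|y| - |x|) := by ring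
    rw [e, abs_mul, abs_of_pos hlam0]
    congr 1
    rcases h with ⟨hx, hy⟩ | ⟨hx, hy⟩
    · rw [abs_of_nonneg hx, abs_of_nonneg hy, abs_sub_comm]
    · rw [abs_of_nonpos hx, abs_of_nonpos hy]
      congr 1
      ring
  -- specialized combinatorics
  have hsameN : ∀ n : ℕ, ∀ j : ℕ, 1 ≤ j → j < S ((n:ℕ):ℤ) →
      (0 < c (S (((n+1:ℕ)):ℤ) + j) ↔ 0 < c j) := by
    intro n j h1 h2
    have h := hsame ((n:ℤ)+2) (by omega)
    have e1 : (n:ℤ)+2-1 = ((n+1:ℕ):ℤ) := by push_cast; ring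
    have e2 : (n:ℤ)+2-2 = ((n:ℕ):ℤ) := by push_cast; ring
    rw [e1, e2] at h
    exact h j h1 h2
  have hoppN : ∀ n : ℕ, (0 < c (S (((n+2:ℕ)):ℤ)) ↔ c (S ((n:ℕ):ℤ)) < 0) := by
    intro n
    have h := hopp ((n:ℤ)+2) (by omega)
    have e2 : (n:ℤ)+2-2 = ((n:ℕ):ℤ) := by push_cast; ring
    have e3 : ((n+2:ℕ):ℤ) = (n:ℤ)+2 := by push_cast; ring
    rw [e2] at h
    rw [e3]
    exact h
  have hadec : ∀ n : ℕ, |c (S (((n+1:ℕ)):ℤ))| < |c (S ((n:ℕ):ℤ))| := by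
    intro n
    have h := hdec (n:ℤ) (by positivity)
    have e1 : (n:ℤ)+1 = ((n+1:ℕ):ℤ) := by push_cast; ring
    rw [e1] at h
    exact h
  have hapos : ∀ n : ℕ, 0 < |c (S ((n:ℕ):ℤ))| := by
    intro n
    exact abs_pos.mpr (hcne _ (by have := hsge1 n; omega))
  -- the distance induction
  have dist : ∀ n : ℕ, ∀ j : ℕ, j ≤ S ((n:ℕ):ℤ) →
      |c (S (((n+1:ℕ)):ℤ) + j) - c j| = lam ^ j * |c (S (((n+1:ℕ)):ℤ))| := by
    intro n j
    induction j with
    | zero => intro _; simp [hc0]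
    | succ j ih =>
      intro hj
      have hprev := ih (by omega)
      have hside : (0 ≤ c (S (((n+1:ℕ)):ℤ) + j) ∧ 0 ≤ c j) ∨
          (c (S (((n+1:ℕ)):ℤ) + j) ≤ 0 ∧ c j ≤ 0) := by
        rcases Nat.eq_zero_or_pos j with h0 | h1
        · subst h0
          rcases le_total 0 (c (S (((n+1:ℕ)):ℤ) + 0)) with h | h
          · exact Or.inl ⟨h, by rw [hc0]⟩
          · exact Or.inr ⟨h, by rw [hc0]⟩
        · have hjlt : j < S ((n:ℕ):ℤ) := by omega
          have hiff := hsameN n j h1 hjlt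
          have hne1 : c j ≠ 0 := hcne j h1
          have hne2 : c (S (((n+1:ℕ)):ℤ) + j) ≠ 0 :=
            hcne _ (by have := hsge1 (n+1); omega)
          rcases lt_trichotomy 0 (c j) with hp | hz | hn
          · exact Or.inl ⟨(hiff.mpr hp).le, hp.le⟩
          · exact absurd hz.symm hne1
          · refine Or.inr ⟨?_, hn.le⟩
            by_contra hcon
            push_neg at hcon
            have : 0 < c j := hiff.mp hcon
            linarith
      have e : S (((n+1:ℕ)):ℤ) + (j+1) = (S (((n+1:ℕ)):ℤ) + j) + 1 := by omega
      rw [e, hiter, hiter, Tstep _ _ hside, hprev]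
      ring
  -- the recursion
  have hrecN : ∀ n : ℕ, |c (S (((n+2:ℕ)):ℤ))| + |c (S ((n:ℕ):ℤ))| =
      lam ^ (S ((n:ℕ):ℤ)) * |c (S (((n+1:ℕ)):ℤ))| := by
    intro n
    have hd := dist n (S ((n:ℕ):ℤ)) le_rfl
    have eidx : S (((n+1:ℕ)):ℤ) + S ((n:ℕ):ℤ) = S (((n+2:ℕ)):ℤ) := (hsrecN n).symm
    rw [eidx] at hd
    set x := c (S (((n+2:ℕ)):ℤ)) with hx
    set y := c (S ((n:ℕ):ℤ)) with hy
    have hne1 : x ≠ 0 := hcne _ (by have := hsge1 (n+2); omega)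
    have hne2 : y ≠ 0 := hcne _ (by have := hsge1 n; omega)
    have hiff := hoppN n
    have habs : |x - y| = |x| + |y| := by
      rcases lt_trichotomy 0 x with hp | hz | hn
      · have hyn : y < 0 := hiff.mp hp
        rw [abs_of_pos hp, abs_of_neg hyn, abs_of_pos (by linarith : 0 < x - y)]
        ring
      · exact absurd hz.symm hne1
      · have hyp : 0 < y := by
          rcases lt_trichotomy 0 y with h | h | h
          · exact h
          · exact absurd h.symm hne2
          · exact absurd (hiff.mpr h) (by linarith)
        rw [abs_of_neg hn, abs_of_pos hyp, abs_of_neg (by linarith : x - y < 0)]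
        ring
    rw [← habs, hd]
  -- conclude
  obtain ⟨β, hβ, htend⟩ := tent_aux lam hlam1 (fun n => S ((n:ℕ):ℤ))
    (fun n => |c (S ((n:ℕ):ℤ))|) hapos hadec hsrecN
    (fun n => by show n ≤ S ((n:ℕ):ℤ); have := hsge1 n; omega) hrecN
  refine ⟨β, hβ, ?_⟩
  have hfun : (fun k : ℕ => lam ^ S ((k : ℤ) + 1) * intervalLength (D (k : ℤ))) =
      (fun n : ℕ => lam ^ (S (((n+1:ℕ)):ℤ)) * |c (S ((n:ℕ):ℤ))|) := by
    funext k
    have e1 : (k:ℤ)+1 = ((k+1:ℕ):ℤ) := by push_cast; ring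
    rw [e1, hDdef]
    congr 1
    unfold intervalLength
    rw [Real.volume_interval]
    rw [ENNReal.toReal_ofReal (abs_nonneg _)]
    congr 1
    ring
  rw [hfun]
  exact htend
end

section
/- There exist positive real numbers α′_+, α″_+, α′_−, α″_−, Q and an integer K ≥ 1 such that for every k ≥ K: Q^{−1} λ^{−S(k)·α″_+} ≤ |h(A_k^+)| ≤ Q λ^{−S(k)·α′_+} and Q^{−1} λ^{−S(k)·α″_−} ≤ |h(A_k^−)| ≤ Q λ^{−S(k)·α′_−}. -/
/-!
Write `x n = |c (S n)|`. For `j < S n` the orbits of `c 0 = 0` and of `c (S (n + 1))` stay on the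
same side of the turning point, where the tent map multiplies distances by exactly `λ`; at time
`S n` they are on opposite sides. Hence `x n + x (n + 2) = λ ^ S n * x (n + 1)`, and as `S` is the
Fibonacci sequence this recurrence traps `x` between powers of `λ ^ (-S n)`: for large `n`,
`2 x (n + 2) ≤ x (n + 1)`, `x 0 ≤ λ ^ (3 S (n + 1)) x (n + 2)` and
`λ ^ (S (n + 1) / 2) x (n + 1) ≤ 2 x 0`. By the mean value theorem and non-flatness, `|h(A_k^±)|`
lies between `e^{-M} x_{k+1}^α (x_k - x_{k+1})` and `e^M x_k^α (x_k - x_{k+1})`, which gives the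
exponents `α' = (α + 1) / 2` and `α'' = 3 (α + 1)`.
-/

open MeasureTheory Filter Set

open Real Nat

theorem abs_tent_sub_tent {lam a b : ℝ} (hlam : 0 ≤ lam) (hab : 0 ≤ a * b) :
    |(lam * (1 - |a|) - 1) - (lam * (1 - |b|) - 1)| = lam * |a - b| := by
  rw [show lam * (1 - |a|) - 1 - (lam * (1 - |b|) - 1) = lam * (|b| - |a|) by ring, abs_mul,
    abs_of_nonneg hlam]
  rcases mul_nonneg_iff.1 hab with ⟨ha, hb⟩ | ⟨ha, hb⟩
  · rw [abs_of_nonneg ha, abs_of_nonneg hb, abs_sub_comm]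
  · rw [abs_of_nonpos ha, abs_of_nonpos hb, neg_sub_neg]

section Shadowing

variable {lam : ℝ} {f : ℝ → ℝ} {c : ℕ → ℝ}

theorem abs_sub_orbit_eq_pow_mul (hf : ∀ a b, 0 ≤ a * b → |f a - f b| = lam * |a - b|)
    (hc : ∀ i, c (i + 1) = f (c i)) {p m : ℕ} (hside : ∀ j < m, 0 ≤ c j * c (p + j)) :
    |c m - c (p + m)| = lam ^ m * |c 0 - c p| := by
  induction m with
  | zero => simp
  | succ m ih =>
    rw [← add_assoc, hc, hc, hf _ _ (hside m m.lt_succ_self),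
      ih fun j hj => hside j (hj.trans m.lt_succ_self), pow_succ]
    ring

theorem abs_add_abs_eq_pow_mul_of_return (hf : ∀ a b, 0 ≤ a * b → |f a - f b| = lam * |a - b|)
    (hc0 : c 0 = 0) (hc : ∀ i, c (i + 1) = f (c i)) {p m : ℕ}
    (hside : ∀ j < m, 0 ≤ c j * c (p + j)) (hopp : c m * c (p + m) < 0) :
    |c m| + |c (p + m)| = lam ^ m * |c p| := by
  have hsign : 0 ≤ c m ∧ 0 ≤ -c (p + m) ∨ c m ≤ 0 ∧ -c (p + m) ≤ 0 := by
    rcases mul_neg_iff.1 hopp with ⟨h1, h2⟩ | ⟨h1, h2⟩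
    · exact Or.inl ⟨h1.le, by linarith⟩
    · exact Or.inr ⟨h1.le, by linarith⟩
  have := abs_sub_orbit_eq_pow_mul hf hc hside
  rwa [hc0, zero_sub, abs_neg, sub_eq_add_neg, abs_add_eq_add_abs_iff _ _ |>.2 hsign,
    abs_neg] at this

end Shadowing

theorem tent_orbit_abs_add_abs_eq {lam : ℝ} (hlam : 0 ≤ lam) {T : ℝ → ℝ}
    (hT : ∀ x, T x = lam * (1 - |x|) - 1) {c : ℕ → ℝ} (hc : ∀ i, c i = T^[i] 0) {S : ℤ → ℕ}
    (hSrec : ∀ k : ℤ, 0 ≤ k → S k = S (k - 1) + S (k - 2))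
    (hsame : ∀ k : ℤ, 2 ≤ k → ∀ j : ℕ, 1 ≤ j → j < S (k - 2) →
      (0 < c (S (k - 1) + j) ↔ 0 < c j))
    (hopp : ∀ k : ℤ, 2 ≤ k → (0 < c (S k) ↔ c (S (k - 2)) < 0))
    (n : ℕ) (hne : c (S (n + 2 : ℕ)) ≠ 0) (hne' : c (S n) ≠ 0) :
    |c (S n)| + |c (S (n + 2 : ℕ))| = lam ^ S n * |c (S (n + 1 : ℕ))| := by
  have hf : ∀ a b, 0 ≤ a * b → |T a - T b| = lam * |a - b| := fun a b hab => by
    rw [hT, hT]; exact abs_tent_sub_tent hlam hab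
  have hsucc : ∀ i, c (i + 1) = T (c i) := fun i => by
    rw [hc, hc, Function.iterate_succ_apply']
  have hsame' := hsame (n + 2 : ℕ) (by omega)
  have hopp' := hopp (n + 2 : ℕ) (by omega)
  have hSk := hSrec (n + 2 : ℕ) (by omega)
  have e1 : ((n + 2 : ℕ) : ℤ) - 1 = (n + 1 : ℕ) := by push_cast; ring
  have e2 : ((n + 2 : ℕ) : ℤ) - 2 = n := by push_cast; ring
  rw [e1, e2] at hSk hsame'
  rw [e2] at hopp'
  rw [hSk]
  refine abs_add_abs_eq_pow_mul_of_return hf (by simp [hc]) hsucc (fun j hj => ?_) ?_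
  · rcases j.eq_zero_or_pos with rfl | hj0
    · simp [hc]
    have hiff := hsame' j hj0 hj
    by_cases hcj : 0 < c j
    · exact (mul_pos hcj (hiff.2 hcj)).le
    · exact mul_nonneg_of_nonpos_of_nonpos (not_lt.1 hcj) (not_lt.1 (hcj ∘ hiff.1))
  · rw [← hSk]
    rcases hne.lt_or_gt with hneg | hpos
    · exact mul_neg_of_pos_of_neg
        (lt_of_le_of_ne (not_lt.1 (hopp'.not.1 hneg.not_gt)) hne'.symm) hneg
    · exact mul_neg_of_neg_of_pos (hopp'.1 hpos) hpos

theorem eq_fib_add_two_of_recurrence {S : ℤ → ℕ} (hSm2 : S (-2) = 0) (hSm1 : S (-1) = 1)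
    (hSrec : ∀ k : ℤ, 0 ≤ k → S k = S (k - 1) + S (k - 2)) (n : ℕ) : S n = fib (n + 2) := by
  induction n using Nat.strong_induction_on with
  | _ n ih =>
    rw [hSrec n (by positivity)]
    match n, ih with
    | 0, _ => simp [hSm1, hSm2]
    | 1, ih => simpa [hSm1, fib_add_two] using ih 0 (by omega)
    | n + 2, ih =>
      have e1 : ((n + 2 : ℕ) : ℤ) - 1 = (n + 1 : ℕ) := by push_cast; ring
      have e2 : ((n + 2 : ℕ) : ℤ) - 2 = n := by push_cast; ring
      rw [e1, e2, ih (n + 1) (by omega), ih n (by omega), fib_add_two (n := n + 2), add_comm]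

section ScaledRecurrence

variable {lam : ℝ} {F : ℕ → ℕ} {x : ℕ → ℝ}

theorem le_pow_mul_of_scaled_recurrence (hlam : 1 ≤ lam)
    (hx : ∀ n, x n + x (n + 2) = lam ^ F n * x (n + 1)) (hF : ∀ n, F (n + 2) = F (n + 1) + F n)
    (hpos : ∀ n, 0 ≤ x n) (n : ℕ) : x 0 ≤ lam ^ F (n + 1) * x n := by
  induction n with
  | zero => exact le_mul_of_one_le_left (hpos 0) (one_le_pow₀ hlam)
  | succ n ih =>
    have hstep : x n ≤ lam ^ F n * x (n + 1) := by linarith [hx n, hpos (n + 2)]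
    calc x 0 ≤ lam ^ F (n + 1) * x n := ih
      _ ≤ lam ^ F (n + 1) * (lam ^ F n * x (n + 1)) :=
        mul_le_mul_of_nonneg_left hstep (pow_nonneg (by linarith) _)
      _ = lam ^ F (n + 2) * x (n + 1) := by rw [hF, pow_add]; ring

theorem two_mul_succ_le_of_scaled_recurrence
    (hx : ∀ n, x n + x (n + 2) = lam ^ F n * x (n + 1)) (hpos : ∀ n, 0 ≤ x n)
    (hanti : StrictAnti x) {n : ℕ} (h3 : 3 ≤ lam ^ F n) : 2 * x (n + 1) ≤ x n := by
  nlinarith [hx n, hanti (Nat.lt_succ_self (n + 1)), mul_le_mul_of_nonneg_right h3 (hpos (n + 1))]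

theorem pow_mul_succ_le_of_scaled_recurrence
    (hx : ∀ n, x n + x (n + 2) = lam ^ F n * x (n + 1)) (hpos : ∀ n, 0 ≤ x n)
    (hanti : StrictAnti x) {n : ℕ} (h2 : 2 ≤ lam ^ F n) : lam ^ F n * x (n + 1) ≤ 2 * x 0 := by
  nlinarith [hx n, hanti (Nat.lt_succ_self (n + 1)), hanti.antitone (Nat.zero_le n),
    mul_le_mul_of_nonneg_right h2 (hpos (n + 1))]

end ScaledRecurrence

theorem Nat.fib_add_two_le_two_mul (n : ℕ) : fib (n + 2) ≤ 2 * fib (n + 1) := by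
  rw [fib_add_two]; linarith [fib_le_fib_succ (n := n)]

theorem eventually_scaled_fib_bounds {lam : ℝ} {x : ℕ → ℝ} (hlam : 1 < lam)
    (hx : ∀ n, x n + x (n + 2) = lam ^ fib (n + 2) * x (n + 1)) (hpos : ∀ n, 0 < x n)
    (hanti : StrictAnti x) {ε : ℝ} (hε : 0 < ε) :
    ∀ᶠ n in atTop, 2 * x (n + 2) ≤ x (n + 1) ∧ x (n + 1) < ε ∧
      x 0 ≤ lam ^ (3 * (fib (n + 3) : ℝ)) * x (n + 2) ∧
      lam ^ ((fib (n + 3) : ℝ) / 2) * x (n + 1) ≤ 2 * x 0 := by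
  have hpos' : ∀ n, 0 ≤ x n := fun n => (hpos n).le
  have hgrow : Tendsto (fun n => lam ^ fib (n + 2)) atTop atTop :=
    (tendsto_pow_atTop_atTop_of_one_lt hlam).comp fib_add_two_strictMono.tendsto_atTop
  filter_upwards [hgrow.eventually_ge_atTop 3, hgrow.eventually_gt_atTop (2 * x 0 / ε)]
    with n h3 hbig
  have hup : lam ^ fib (n + 2) * x (n + 1) ≤ 2 * x 0 :=
    pow_mul_succ_le_of_scaled_recurrence hx hpos' hanti (by linarith)
  refine ⟨two_mul_succ_le_of_scaled_recurrence hx hpos' hanti ?_, ?_, ?_, ?_⟩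
  · exact h3.trans (pow_le_pow_right₀ hlam.le (fib_mono (by omega)))
  · rw [div_lt_iff₀ hε] at hbig
    nlinarith [hpos (n + 1)]
  · have hlow : x 0 ≤ lam ^ fib (n + 5) * x (n + 2) :=
      le_pow_mul_of_scaled_recurrence hlam.le hx (fun n => fib_add_two.trans (add_comm _ _))
        hpos' (n + 2)
    refine hlow.trans (mul_le_mul_of_nonneg_right ?_ (hpos' _))
    rw [← Real.rpow_natCast]
    refine Real.rpow_le_rpow_of_exponent_le hlam.le ?_
    have h5 : fib (n + 5) = fib (n + 3) + fib (n + 4) := fib_add_two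
    have h4 : fib (n + 4) ≤ 2 * fib (n + 3) := fib_add_two_le_two_mul (n + 2)
    exact_mod_cast (by omega : fib (n + 5) ≤ 3 * fib (n + 3))
  · refine le_trans (mul_le_mul_of_nonneg_right ?_ (hpos' _)) hup
    rw [← Real.rpow_natCast]
    refine Real.rpow_le_rpow_of_exponent_le hlam.le ?_
    have : (fib (n + 3) : ℝ) ≤ 2 * fib (n + 2) := by exact_mod_cast fib_add_two_le_two_mul (n + 1)
    linarith

section Order

variable {α : Type*} [LinearOrder α] [TopologicalSpace α] [OrderTopology α] [DenselyOrdered α]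
  {a b c : α}

theorem Ioo_sdiff_closure_Ioo_of_left_lt (hca : c < a) :
    Ioo c b \ closure (Ioo c a) = Ioo a b := by
  rw [closure_Ioo hca.ne]
  ext t
  simp only [Set.mem_sdiff, mem_Ioo, mem_Icc]
  constructor
  · rintro ⟨⟨hct, htb⟩, hna⟩
    exact ⟨lt_of_not_ge fun h => hna ⟨hct.le, h⟩, htb⟩
  · rintro ⟨hat, htb⟩
    exact ⟨⟨hca.trans hat, htb⟩, fun h => (h.2.trans_lt hat).false⟩

theorem Ioo_sdiff_closure_Ioo_of_lt_right (hac : a < c) :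
    Ioo b c \ closure (Ioo a c) = Ioo b a := by
  rw [closure_Ioo hac.ne]
  ext t
  simp only [Set.mem_sdiff, mem_Ioo, mem_Icc]
  constructor
  · rintro ⟨⟨hbt, htc⟩, hna⟩
    exact ⟨hbt, lt_of_not_ge fun h => hna ⟨h, htc.le⟩⟩
  · rintro ⟨hbt, hta⟩
    exact ⟨⟨hbt, hta.trans hac⟩, fun h => (hta.trans_le h.1).false⟩

end Order

section ImageLength

variable {h h' : ℝ → ℝ} {s : Set ℝ} {p q : ℝ}

theorem exists_intervalLength_image_Ioo_eq (hpq : p < q) (hsub : Icc p q ⊆ interior s)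
    (hmono : StrictMonoOn h s) (hd : ∀ t ∈ s, HasDerivWithinAt h (h' t) s t) :
    ∃ ξ ∈ Ioo p q, intervalLength (h '' Ioo p q) = h' ξ * (q - p) := by
  have hderiv : ∀ t ∈ Icc p q, HasDerivAt h (h' t) t := fun t ht =>
    (hd t (interior_subset (hsub ht))).hasDerivAt (mem_interior_iff_mem_nhds.1 (hsub ht))
  have hcont : ContinuousOn h (Icc p q) := fun t ht =>
    (hderiv t ht).continuousAt.continuousWithinAt
  have hmono' : StrictMonoOn h (Icc p q) := hmono.mono (hsub.trans interior_subset)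
  obtain ⟨ξ, hξ, hslope⟩ :=
    exists_hasDerivAt_eq_slope h h' hpq hcont fun t ht => hderiv t (Ioo_subset_Icc_self ht)
  have hlt : h p < h q := hmono' (left_mem_Icc.2 hpq.le) (right_mem_Icc.2 hpq.le) hpq
  refine ⟨ξ, hξ, ?_⟩
  rw [intervalLength, hcont.image_Ioo_of_strictMonoOn hpq.le hmono', Real.volume_Ioo,
    ENNReal.toReal_ofReal (sub_nonneg.2 hlt.le), hslope, div_mul_cancel₀ _ (sub_ne_zero.2 hpq.ne')]

theorem intervalLength_image_Ioo_bounds {a b α M : ℝ} (hpq : p < q) (hsub : Icc p q ⊆ interior s)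
    (hmono : StrictMonoOn h s) (hd : ∀ t ∈ s, HasDerivWithinAt h (h' t) s t)
    (ha : 0 ≤ a) (hα : 0 ≤ α) (habs : ∀ t ∈ Ioo p q, a ≤ |t| ∧ |t| ≤ b)
    (hh' : ∀ t ∈ Ioo p q, exp (-M) * |t| ^ α ≤ h' t ∧ h' t ≤ exp M * |t| ^ α) :
    exp (-M) * a ^ α * (q - p) ≤ intervalLength (h '' Ioo p q) ∧
      intervalLength (h '' Ioo p q) ≤ exp M * b ^ α * (q - p) := by
  obtain ⟨ξ, hξ, hL⟩ := exists_intervalLength_image_Ioo_eq hpq hsub hmono hd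
  obtain ⟨haξ, hξb⟩ := habs ξ hξ
  have hqp : 0 ≤ q - p := sub_nonneg.2 hpq.le
  rw [hL]
  constructor
  · refine mul_le_mul_of_nonneg_right (le_trans ?_ (hh' ξ hξ).1) hqp
    gcongr
  · refine mul_le_mul_of_nonneg_right ((hh' ξ hξ).2.trans ?_) hqp
    gcongr

variable {a b α M δ : ℝ}

theorem intervalLength_image_Ioo_bounds_of_pos (hmono : StrictMonoOn h (Icc (-1) 1))
    (hd : ∀ t ∈ Icc (-1) 1, HasDerivWithinAt h (h' t) (Icc (-1) 1) t) (ha : 0 < a) (hab : a < b)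
    (hb : b < 1) (hbδ : b ≤ δ) (hα : 0 ≤ α)
    (hnf : ∀ t ∈ Ioo 0 δ, exp (-M) * t ^ α ≤ h' t ∧ h' t ≤ exp M * t ^ α) :
    exp (-M) * a ^ α * (b - a) ≤ intervalLength (h '' Ioo a b) ∧
      intervalLength (h '' Ioo a b) ≤ exp M * b ^ α * (b - a) := by
  have hsub : Icc a b ⊆ interior (Icc (-1) 1) := by
    rw [interior_Icc]; exact Icc_subset_Ioo (by linarith) hb
  refine intervalLength_image_Ioo_bounds hab hsub hmono hd ha.le hα (fun t ht => ?_)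
    (fun t ht => ?_)
  all_goals rw [abs_of_pos (ha.trans ht.1)]
  · exact ⟨ht.1.le, ht.2.le⟩
  · exact hnf t ⟨ha.trans ht.1, ht.2.trans_le hbδ⟩

theorem intervalLength_image_Ioo_bounds_of_neg (hmono : StrictMonoOn h (Icc (-1) 1))
    (hd : ∀ t ∈ Icc (-1) 1, HasDerivWithinAt h (h' t) (Icc (-1) 1) t) (ha : 0 < a) (hab : a < b)
    (hb : b < 1) (hbδ : b ≤ δ) (hα : 0 ≤ α)
    (hnf : ∀ t ∈ Ioo (-δ) 0, exp (-M) * |t| ^ α ≤ h' t ∧ h' t ≤ exp M * |t| ^ α) :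
    exp (-M) * a ^ α * (b - a) ≤ intervalLength (h '' Ioo (-b) (-a)) ∧
      intervalLength (h '' Ioo (-b) (-a)) ≤ exp M * b ^ α * (b - a) := by
  rw [show b - a = -a - -b by ring]
  have hsub : Icc (-b) (-a) ⊆ interior (Icc (-1) 1) := by
    rw [interior_Icc]; exact Icc_subset_Ioo (by linarith) (by linarith)
  refine intervalLength_image_Ioo_bounds (neg_lt_neg hab) hsub hmono hd ha.le hα (fun t ht => ?_)
    (fun t ht => hnf t ⟨by linarith [ht.1], by linarith [ht.2]⟩)
  rw [abs_of_neg (by linarith [ht.2])]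
  exact ⟨by linarith [ht.2], by linarith [ht.1]⟩

end ImageLength

theorem annulus_length_rpow_bounds {lam α M x₀ s a b L Q : ℝ} (hlam : 0 < lam) (hα : -1 ≤ α)
    (hx₀ : 0 < x₀) (ha : 0 < a) (hab : 2 * a ≤ b) (hlow : x₀ ≤ lam ^ (3 * s) * a)
    (hup : lam ^ (s / 2) * b ≤ 2 * x₀)
    (hL : exp (-M) * a ^ α * (b - a) ≤ L ∧ L ≤ exp M * b ^ α * (b - a))
    (hQ : max (exp M * (2 * x₀) ^ (α + 1)) (exp (-M) * x₀ ^ (α + 1))⁻¹ ≤ Q) :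
    Q⁻¹ * lam ^ (-s * (3 * (α + 1))) ≤ L ∧ L ≤ Q * lam ^ (-s * ((α + 1) / 2)) := by
  have hb : 0 < b := by linarith
  have hu : 0 ≤ α + 1 := by linarith
  have hlower : x₀ ^ (α + 1) * lam ^ (-s * (3 * (α + 1))) ≤ a ^ α * (b - a) := by
    have h1 : x₀ ^ (α + 1) ≤ lam ^ (s * (3 * (α + 1))) * a ^ (α + 1) := by
      rw [show s * (3 * (α + 1)) = 3 * s * (α + 1) by ring, Real.rpow_mul hlam.le,
        ← Real.mul_rpow (rpow_nonneg hlam.le _) ha.le]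
      exact Real.rpow_le_rpow hx₀.le hlow hu
    rw [neg_mul, Real.rpow_neg hlam.le, ← div_eq_mul_inv, div_le_iff₀ (by positivity)]
    refine h1.trans ?_
    rw [mul_comm, Real.rpow_add_one ha.ne']
    gcongr
    linarith
  have hupper : b ^ α * (b - a) ≤ (2 * x₀) ^ (α + 1) * lam ^ (-s * ((α + 1) / 2)) := by
    have h1 : lam ^ (s * ((α + 1) / 2)) * b ^ (α + 1) ≤ (2 * x₀) ^ (α + 1) := by
      rw [show s * ((α + 1) / 2) = s / 2 * (α + 1) by ring, Real.rpow_mul hlam.le,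
        ← Real.mul_rpow (rpow_nonneg hlam.le _) hb.le]
      exact Real.rpow_le_rpow (by positivity) hup hu
    rw [neg_mul, Real.rpow_neg hlam.le, ← div_eq_mul_inv, le_div_iff₀ (by positivity), mul_comm]
    refine le_trans ?_ h1
    rw [Real.rpow_add_one hb.ne']
    gcongr
    linarith
  obtain ⟨hQup, hQlow⟩ := max_le_iff.1 hQ
  have hQinv : Q⁻¹ ≤ exp (-M) * x₀ ^ (α + 1) := inv_le_of_inv_le₀ (by positivity) hQlow
  constructor
  · calc Q⁻¹ * lam ^ (-s * (3 * (α + 1)))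
        ≤ exp (-M) * x₀ ^ (α + 1) * lam ^ (-s * (3 * (α + 1))) := by gcongr
      _ ≤ exp (-M) * (a ^ α * (b - a)) := by rw [mul_assoc]; gcongr
      _ ≤ L := by rw [← mul_assoc]; exact hL.1
  · calc L ≤ exp M * (b ^ α * (b - a)) := by rw [← mul_assoc]; exact hL.2
      _ ≤ exp M * ((2 * x₀) ^ (α + 1) * lam ^ (-s * ((α + 1) / 2))) := by gcongr
      _ ≤ Q * lam ^ (-s * ((α + 1) / 2)) := by rw [← mul_assoc]; gcongr

theorem length_of_image_annuli_general
    (lam : ℝ) (hlam1 : 1 < lam)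
    (T : ℝ → ℝ) (hT : ∀ x : ℝ, T x = lam * (1 - |x|) - 1)
    (c : ℕ → ℝ) (hc : ∀ i : ℕ, c i = T^[i] 0)
    (S : ℤ → ℕ) (hSm2 : S (-2) = 0) (hSm1 : S (-1) = 1)
    (hSrec : ∀ k : ℤ, 0 ≤ k → S k = S (k - 1) + S (k - 2))
    (hsame : ∀ k : ℤ, 2 ≤ k → ∀ j : ℕ, 1 ≤ j → j < S (k - 2) →
      (0 < c (S (k - 1) + j) ↔ 0 < c j))
    (hopp : ∀ k : ℤ, 2 ≤ k → (0 < c (S k) ↔ c (S (k - 2)) < 0))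
    (hdec : ∀ k : ℤ, 0 ≤ k → |c (S (k + 1))| < |c (S k)|)
    (h : ℝ → ℝ) (h' : ℝ → ℝ)
    (hmono : StrictMonoOn h (Set.Icc (-1 : ℝ) 1))
    (hhd : ∀ x ∈ Set.Icc (-1 : ℝ) 1, HasDerivWithinAt h (h' x) (Set.Icc (-1 : ℝ) 1) x)
    (αp αm M δ : ℝ) (hαp : 0 < αp) (hαm : 0 < αm)
    (hδ : 0 < δ)
    (hnfp : ∀ x ∈ Set.Ioo (0 : ℝ) δ,
      Real.exp (-M) * x ^ αp ≤ h' x ∧ h' x ≤ Real.exp M * x ^ αp)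
    (hnfm : ∀ x ∈ Set.Ioo (-δ) (0 : ℝ),
      Real.exp (-M) * |x| ^ αm ≤ h' x ∧ h' x ≤ Real.exp M * |x| ^ αm) :
    ∃ α'p α''p α'm α''m Q : ℝ, ∃ K : ℕ,
      0 < α'p ∧ 0 < α''p ∧ 0 < α'm ∧ 0 < α''m ∧ 0 < Q ∧ 1 ≤ K ∧
      ∀ k : ℤ, (K : ℤ) ≤ k →
        (Q⁻¹ * lam ^ (-(S k : ℝ) * α''p)
            ≤ intervalLength (h '' (Set.Ioo (0 : ℝ) |c (S k)| \ closure (Set.Ioo (0 : ℝ) |c (S (k + 1))|))) ∧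
          intervalLength (h '' (Set.Ioo (0 : ℝ) |c (S k)| \ closure (Set.Ioo (0 : ℝ) |c (S (k + 1))|))) ≤ Q * lam ^ (-(S k : ℝ) * α'p)) ∧
        (Q⁻¹ * lam ^ (-(S k : ℝ) * α''m)
            ≤ intervalLength (h '' (Set.Ioo (-|c (S k)|) (0 : ℝ) \ closure (Set.Ioo (-|c (S (k + 1))|) (0 : ℝ)))) ∧
          intervalLength (h '' (Set.Ioo (-|c (S k)|) (0 : ℝ) \ closure (Set.Ioo (-|c (S (k + 1))|) (0 : ℝ)))) ≤ Q * lam ^ (-(S k : ℝ) * α'm)) := by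
  have hS : ∀ n : ℕ, S n = fib (n + 2) := eq_fib_add_two_of_recurrence hSm2 hSm1 hSrec
  set x : ℕ → ℝ := fun n => |c (S n)|
  have hanti : StrictAnti x := strictAnti_nat_of_succ_lt fun n => by
    simpa [x] using hdec n (by positivity)
  have hpos : ∀ n, 0 < x n := fun n => (abs_nonneg _).trans_lt (hanti n.lt_succ_self)
  have hrec : ∀ n, x n + x (n + 2) = lam ^ fib (n + 2) * x (n + 1) := fun n => by
    rw [← hS n]
    exact tent_orbit_abs_add_abs_eq (by linarith) hT hc hSrec hsame hopp n
      (abs_pos.1 (hpos _)) (abs_pos.1 (hpos n))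
  obtain ⟨N, hN⟩ := eventually_atTop.1
    (eventually_scaled_fib_bounds hlam1 hrec hpos hanti (lt_min hδ one_pos))
  set Q := max (max (exp M * (2 * x 0) ^ (αp + 1)) (exp (-M) * x 0 ^ (αp + 1))⁻¹)
    (max (exp M * (2 * x 0) ^ (αm + 1)) (exp (-M) * x 0 ^ (αm + 1))⁻¹)
  have hQ : 0 < Q := lt_max_of_lt_left (lt_max_of_lt_left
    (mul_pos (exp_pos M) (rpow_pos_of_pos (by linarith [hpos 0]) _)))
  refine ⟨(αp + 1) / 2, 3 * (αp + 1), (αm + 1) / 2, 3 * (αm + 1), Q, N + 1, by positivity,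
    by positivity, by positivity, by positivity, hQ, by omega, fun k hk => ?_⟩
  obtain ⟨n, rfl⟩ : ∃ n : ℕ, k = (n + 1 : ℕ) := ⟨(k - 1).toNat, by omega⟩
  obtain ⟨hgap, hsmall, hlow, hup⟩ := hN n (by omega)
  have hs : (fib (n + 3) : ℝ) = S (n + 1 : ℕ) := by rw [hS]
  rw [hs] at hlow hup
  have hab : x (n + 2) < x (n + 1) := hanti (Nat.lt_succ_self _)
  have hb1 : x (n + 1) < 1 := hsmall.trans_le (min_le_right _ _)
  have hbδ : x (n + 1) ≤ δ := hsmall.le.trans (min_le_left _ _)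
  rw [show ((n + 1 : ℕ) : ℤ) + 1 = (n + 2 : ℕ) by push_cast; ring,
    Ioo_sdiff_closure_Ioo_of_left_lt (hpos _),
    Ioo_sdiff_closure_Ioo_of_lt_right (neg_lt_zero.2 (hpos _))]
  exact ⟨annulus_length_rpow_bounds (by linarith) (by linarith) (hpos 0) (hpos _) hgap hlow hup
      (intervalLength_image_Ioo_bounds_of_pos hmono hhd (hpos _) hab hb1 hbδ hαp.le hnfp)
      (le_max_left _ _),
    annulus_length_rpow_bounds (by linarith) (by linarith) (hpos 0) (hpos _) hgap hlow hup
      (intervalLength_image_Ioo_bounds_of_neg hmono hhd (hpos _) hab hb1 hbδ hαm.le hnfm)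
      (le_max_right _ _)⟩

theorem length_of_image_annuli
    (lam : ℝ) (hlam1 : 1 < lam) (hlam2 : lam ≤ 2)
    (T : ℝ → ℝ) (hT : ∀ x : ℝ, T x = lam * (1 - |x|) - 1)
    (c : ℕ → ℝ) (hc : ∀ i : ℕ, c i = T^[i] 0)
    (S : ℤ → ℕ) (hSm2 : S (-2) = 0) (hSm1 : S (-1) = 1)
    (hSrec : ∀ k : ℤ, 0 ≤ k → S k = S (k - 1) + S (k - 2))
    (hcne : ∀ j : ℕ, 1 ≤ j → c j ≠ 0)
    (hc2neg : c 2 < 0) (hc1pos : 0 < c 1)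
    (hsame : ∀ k : ℤ, 2 ≤ k → ∀ j : ℕ, 1 ≤ j → j < S (k - 2) →
      (0 < c (S (k - 1) + j) ↔ 0 < c j))
    (hopp : ∀ k : ℤ, 2 ≤ k → (0 < c (S k) ↔ c (S (k - 2)) < 0))
    (hdec : ∀ k : ℤ, 0 ≤ k → |c (S (k + 1))| < |c (S k)|)
    (hc34 : |c 3| < |c 4|)
    (h : ℝ → ℝ) (h' : ℝ → ℝ) (hinv : ℝ → ℝ)
    (hmono : StrictMonoOn h (Set.Icc (-1 : ℝ) 1))
    (hbij : Set.BijOn h (Set.Icc (-1 : ℝ) 1) (Set.Icc (-1 : ℝ) 1))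
    (hhd : ∀ x ∈ Set.Icc (-1 : ℝ) 1, HasDerivWithinAt h (h' x) (Set.Icc (-1 : ℝ) 1) x)
    (hC1 : ContinuousOn h' (Set.Icc (-1 : ℝ) 1))
    (hinvl : ∀ x ∈ Set.Icc (-1 : ℝ) 1, hinv (h x) = x)
    (hinvr : ∀ y ∈ Set.Icc (-1 : ℝ) 1, h (hinv y) = y)
    (h'ne : ∀ x ∈ Set.Icc (-1 : ℝ) 1, x ≠ 0 → h' x ≠ 0)
    (h'0 : h' 0 = 0)
    (αp αm M δ : ℝ) (hαp : 0 < αp) (hαm : 0 < αm) (hM : 0 < M)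
    (hδ : 0 < δ) (hδ1 : δ ≤ 1)
    (hnfp : ∀ x ∈ Set.Ioo (0 : ℝ) δ,
      Real.exp (-M) * x ^ αp ≤ h' x ∧ h' x ≤ Real.exp M * x ^ αp)
    (hnfm : ∀ x ∈ Set.Ioo (-δ) (0 : ℝ),
      Real.exp (-M) * |x| ^ αm ≤ h' x ∧ h' x ≤ Real.exp M * |x| ^ αm) :
    ∃ α'p α''p α'm α''m Q : ℝ, ∃ K : ℕ,
      0 < α'p ∧ 0 < α''p ∧ 0 < α'm ∧ 0 < α''m ∧ 0 < Q ∧ 1 ≤ K ∧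
      ∀ k : ℤ, (K : ℤ) ≤ k →
        (Q⁻¹ * lam ^ (-(S k : ℝ) * α''p)
            ≤ intervalLength (h '' (Set.Ioo (0 : ℝ) |c (S k)| \ closure (Set.Ioo (0 : ℝ) |c (S (k + 1))|))) ∧
          intervalLength (h '' (Set.Ioo (0 : ℝ) |c (S k)| \ closure (Set.Ioo (0 : ℝ) |c (S (k + 1))|))) ≤ Q * lam ^ (-(S k : ℝ) * α'p)) ∧
        (Q⁻¹ * lam ^ (-(S k : ℝ) * α''m)
            ≤ intervalLength (h '' (Set.Ioo (-|c (S k)|) (0 : ℝ) \ closure (Set.Ioo (-|c (S (k + 1))|) (0 : ℝ)))) ∧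
          intervalLength (h '' (Set.Ioo (-|c (S k)|) (0 : ℝ) \ closure (Set.Ioo (-|c (S (k + 1))|) (0 : ℝ)))) ≤ Q * lam ^ (-(S k : ℝ) * α'm)) :=
  length_of_image_annuli_general lam hlam1 T hT c hc S hSm2 hSm1 hSrec hsame hopp hdec h h' hmono
    hhd αp αm M δ hαp hαm hδ hnfp hnfm
end
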